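/- arXiv:2109.13709 — 5 statements merged into one kernel-verified Lean document; each statement's English description precedes it below -/
import Mathlib

section
/- Let G be a graph with a perfect matching M. A subset S ⊆ M is a forcing set of M (i.e., M is the unique perfect matching of G containing S) if and only if every M-alternating cycle of G contains at least one edge of S. -/
open SimpleGraph

/-- `M` is a perfect matching of the graph `G` restricted to the vertex set `A`:
a set of pairwise disjoint edges of `G`, with all endpoints in `A`, covering every
vertex of `A`. -/
def IsPMOn {V : Type*} (G : SimpleGraph V) (A : Set V) (M : Set (Sym2 V)) : Prop :=
  M ⊆ G.edgeSet ∧ (∀ e ∈ M, ∀ v ∈ e, v ∈ A) ∧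
    (M.Pairwise fun e f => ∀ v, v ∈ e → v ∉ f) ∧ (∀ v ∈ A, ∃ e ∈ M, v ∈ e)

/-- `S` is a forcing set of the perfect matching `M` of `G` (restricted to `A`):
`S ⊆ M` and `M` is the unique perfect matching containing `S`. -/
def IsForcingOn {V : Type*} (G : SimpleGraph V) (A : Set V) (M S : Set (Sym2 V)) : Prop :=
  S ⊆ M ∧ ∀ M', IsPMOn G A M' → S ⊆ M' → M' = M

/-- The forcing number of a perfect matching: minimum size of a forcing set. -/
noncomputable def forcingNumOn {V : Type*} (G : SimpleGraph V) (A : Set V)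
    (M : Set (Sym2 V)) : ℕ :=
  sInf {n | ∃ S, IsForcingOn G A M S ∧ S.ncard = n}

/-- Vertices remaining after deleting the endpoints of edges in `S`. -/
def delVerts {V : Type*} (S : Set (Sym2 V)) : Set V := {v | ∀ e ∈ S, v ∉ e}

/-- A closed walk `c` is an `M`-alternating cycle: it is a cycle and its edges
alternate between `M` and its complement (including around the wrap). -/
def IsAltCycle {V : Type*} (G : SimpleGraph V) (M : Set (Sym2 V)) {v : V}
    (c : G.Walk v v) : Prop :=
  c.IsCycle ∧ c.edges.Chain' (fun e f => e ∈ M ↔ f ∉ M) ∧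
    ∀ e f, c.edges.head? = some e → c.edges.getLast? = some f → (f ∈ M ↔ e ∉ M)

/-! If `M'` is a second perfect matching containing `S`, the symmetric difference of `M` and `M'`
is a nonempty graph of disjoint `M`-alternating cycles, and none of its edges lies in
`S ⊆ M ∩ M'`. Conversely, switching `M` along an `M`-alternating cycle that avoids `S` gives a
perfect matching other than `M` that still contains `S`.

Matchings are turned into spanning graphs so that Mathlib's `IsCycles` / `IsAlternating` theory
of symmetric differences applies; the list-based alternation in `IsAltCycle` is then the local
condition that the two cycle edges at each vertex lie on opposite sides of `M`. -/

open scoped symmDiff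

lemma iff_not_of_ne_of_mem_pair {α : Type*} {p : α → Prop} {a b x y : α}
    (hab : p a ↔ ¬ p b) (hx : x ∈ ({a, b} : Set α)) (hy : y ∈ ({a, b} : Set α))
    (hxy : x ≠ y) : p x ↔ ¬ p y := by
  rcases hx with rfl | rfl <;> rcases hy with rfl | rfl <;> first | exact absurd rfl hxy | tauto

namespace SimpleGraph

variable {V : Type*} {G H : SimpleGraph V}

lemma exists_edgeSet_eq_of_subset_edgeSet {M : Set (Sym2 V)} (hM : M ⊆ G.edgeSet) :
    ∃ H : SimpleGraph V, H.edgeSet = M :=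
  ⟨fromEdgeSet M, by
    rw [edgeSet_fromEdgeSet, sdiff_eq_left, Set.disjoint_left]
    exact fun e he => G.not_isDiag_of_mem_edgeSet (hM he)⟩

lemma Subgraph.isPerfectMatching_top_iff :
    (⊤ : H.Subgraph).IsPerfectMatching ↔ ∀ v, ∃! w, H.Adj v w := by
  simp [Subgraph.isPerfectMatching_iff]

lemma isPMOn_univ_edgeSet_iff :
    IsPMOn G Set.univ H.edgeSet ↔ H ≤ G ∧ (⊤ : H.Subgraph).IsPerfectMatching := by
  rw [Subgraph.isPerfectMatching_top_iff, IsPMOn, edgeSet_subset_edgeSet]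
  simp only [Set.mem_univ, implies_true, forall_const, true_and, and_congr_right_iff]
  intro _
  constructor
  · rintro ⟨hdisj, hcover⟩ v
    obtain ⟨e, he, hve⟩ := hcover v
    obtain ⟨w, rfl⟩ := Sym2.mem_iff_exists.mp hve
    refine ⟨w, he, fun y hy => ?_⟩
    by_contra hyw
    exact hdisj hy he (fun h => hyw (Sym2.congr_right.mp h)) v (Sym2.mem_mk_left _ _)
      (Sym2.mem_mk_left _ _)
  · intro h
    refine ⟨fun e he f hf hef v hve hvf => hef ?_, fun v => ?_⟩
    · obtain ⟨a, rfl⟩ := Sym2.mem_iff_exists.mp hve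
      obtain ⟨b, rfl⟩ := Sym2.mem_iff_exists.mp hvf
      rw [(h v).unique (y₁ := a) (y₂ := b) he hf]
    · obtain ⟨w, hw, -⟩ := h v
      exact ⟨s(v, w), hw, Sym2.mem_mk_left _ _⟩

lemma Walk.IsCycle.isAlternating_spanningCoe_toSubgraph_iff {u : V} {c : G.Walk u u}
    (hc : c.IsCycle) :
    c.toSubgraph.spanningCoe.IsAlternating H ↔
      (∀ i, i + 1 < c.length → (H.Adj (c.getVert (i + 1)) (c.getVert i) ↔
        ¬ H.Adj (c.getVert (i + 1)) (c.getVert (i + 2)))) ∧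
      (H.Adj u c.snd ↔ ¬ H.Adj u c.penultimate) := by
  constructor
  · intro halt
    refine ⟨fun i hi => halt ?_ ?_ ?_, halt hc.snd_ne_penultimate
      (c.toSubgraph_adj_snd hc.not_nil) (c.toSubgraph_adj_penultimate hc.not_nil).symm⟩
    · simpa using hc.getVert_sub_one_ne_getVert_add_one (i := i + 1) (by omega)
    · exact (c.toSubgraph_adj_getVert (i := i) (by omega)).symm
    · exact c.toSubgraph_adj_getVert (i := i + 1) hi
  · rintro ⟨hinternal, hend⟩ v w w' hww' hvw hvw'
    rw [Subgraph.spanningCoe_adj] at hvw hvw'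
    have hw : w ∈ c.toSubgraph.neighborSet v := hvw
    have hw' : w' ∈ c.toSubgraph.neighborSet v := hvw'
    obtain ⟨j, rfl, hj⟩ := mem_support_iff_exists_getVert.mp (mem_support_of_adj_toSubgraph hvw)
    by_cases hjend : j = 0 ∨ j = c.length
    · rw [(hc.getVert_endpoint_iff hj).mpr hjend] at hw hw' ⊢
      rw [hc.neighborSet_toSubgraph_endpoint] at hw hw'
      exact iff_not_of_ne_of_mem_pair hend hw hw' hww'
    · obtain ⟨i, rfl⟩ : ∃ i, j = i + 1 := ⟨j - 1, by omega⟩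
      rw [hc.neighborSet_toSubgraph_internal (by omega) (by omega)] at hw hw'
      simp only [add_tsub_cancel_right] at hw hw'
      exact iff_not_of_ne_of_mem_pair (hinternal i (by omega)) hw hw' hww'

lemma isAltCycle_edgeSet_iff {u : V} {c : G.Walk u u} :
    IsAltCycle G H.edgeSet c ↔ c.IsCycle ∧ c.toSubgraph.spanningCoe.IsAlternating H := by
  refine and_congr_right fun hc => ?_
  rw [hc.isAlternating_spanningCoe_toSubgraph_iff]
  refine and_congr ?_ ?_
  · rw [List.Chain', List.isChain_iff_getElem]
    simp only [Walk.getElem_edges, Walk.length_edges, mem_edgeSet]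
    refine forall_congr' fun i => ⟨fun h hi => ?_, fun h hi => ?_⟩
    · rw [H.adj_comm (c.getVert (i + 1)) (c.getVert i)]
      exact h hi
    · rw [H.adj_comm (c.getVert i)]
      exact h hi
  · have hne : c.edges ≠ [] := Walk.edges_eq_nil.not.mpr hc.not_nil
    rw [List.head?_eq_some_head hne, List.getLast?_eq_some_getLast hne]
    simp [H.adj_comm c.penultimate u, iff_not_comm]

lemma IsCycles.exists_isCycle_spanningCoe_toSubgraph_le [Finite V] {D : SimpleGraph V}
    (hD : D.IsCycles) (hne : D ≠ ⊥) (hDG : D ≤ G) :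
    ∃ (u : V) (c : G.Walk u u), c.IsCycle ∧ c.toSubgraph.spanningCoe ≤ D := by
  obtain ⟨v, w, hvw⟩ := ne_bot_iff_exists_adj.mp hne
  obtain ⟨p, hp, -⟩ := hD.exists_cycle_toSubgraph_verts_eq_connectedComponentSupp
    (c := D.connectedComponentMk v) rfl ⟨w, hvw⟩
  refine ⟨v, p.mapLe hDG, hp.mapLe hDG, fun a b hab => ?_⟩
  rw [Subgraph.spanningCoe_adj, Walk.adj_toSubgraph_mapLe] at hab
  exact hab.adj_sub

lemma mem_edgeSet_symmDiff {H' : SimpleGraph V} {e : Sym2 V} :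
    e ∈ (H ∆ H').edgeSet ↔
      (e ∈ H.edgeSet ∧ e ∉ H'.edgeSet) ∨ (e ∈ H'.edgeSet ∧ e ∉ H.edgeSet) := by
  rw [symmDiff_def, edgeSet_sup, edgeSet_sdiff, edgeSet_sdiff]
  rfl

lemma exists_mem_edges_mem_of_isForcingOn {S : Set (Sym2 V)} (hHG : H ≤ G)
    (hH : (⊤ : H.Subgraph).IsPerfectMatching) (hS : IsForcingOn G Set.univ H.edgeSet S)
    {u : V} {c : G.Walk u u} (hc : c.IsCycle) (halt : c.toSubgraph.spanningCoe.IsAlternating H) :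
    ∃ e ∈ c.edges, e ∈ S := by
  by_contra! hcS
  set C := c.toSubgraph.spanningCoe
  have hCG : C ≤ G := fun a b hab => hab.adj_sub
  have hflip : IsPMOn G Set.univ (H ∆ C).edgeSet :=
    isPMOn_univ_edgeSet_iff.mpr ⟨symmDiff_le_sup.trans (sup_le hHG hCG),
      hH.symmDiff_of_isAlternating halt hc.isCycles_spanningCoe_toSubgraph⟩
  have hSflip : S ⊆ (H ∆ C).edgeSet := fun e he => mem_edgeSet_symmDiff.mpr <| Or.inl
    ⟨hS.1 he, by
      rw [Subgraph.edgeSet_spanningCoe, Walk.mem_edges_toSubgraph]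
      exact fun hec => hcS e hec he⟩
  have hC : C = ⊥ := by
    rw [← symmDiff_eq_left (a := H), ← edgeSet_inj]
    exact hS.2 _ hflip hSflip
  have hadj : C.Adj u c.snd := c.toSubgraph_adj_snd hc.not_nil
  simp [hC] at hadj

lemma isForcingOn_of_forall_exists_mem_edges_mem [Finite V] {S : Set (Sym2 V)} (hHG : H ≤ G)
    (hH : (⊤ : H.Subgraph).IsPerfectMatching) (hS : S ⊆ H.edgeSet)
    (hmeet : ∀ (u : V) (c : G.Walk u u), c.IsCycle →
      c.toSubgraph.spanningCoe.IsAlternating H → ∃ e ∈ c.edges, e ∈ S) :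
    IsForcingOn G Set.univ H.edgeSet S := by
  refine ⟨hS, fun M' hM' hSM' => ?_⟩
  obtain ⟨H', rfl⟩ := exists_edgeSet_eq_of_subset_edgeSet hM'.1
  obtain ⟨hH'G, hH'⟩ := isPMOn_univ_edgeSet_iff.mp hM'
  by_contra hne
  have hD : (H ∆ H').IsCycles := hH.symmDiff_isCycles hH'
  have hDne : H ∆ H' ≠ ⊥ := fun h => hne (congrArg edgeSet (symmDiff_eq_bot.mp h)).symm
  obtain ⟨u, c, hc, hcD⟩ :=
    hD.exists_isCycle_spanningCoe_toSubgraph_le hDne (symmDiff_le_sup.trans (sup_le hHG hH'G))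
  obtain ⟨e, hec, heS⟩ := hmeet u c hc ((hH.isAlternating_symmDiff_left hH').mono hcD)
  have heD : e ∈ (H ∆ H').edgeSet := edgeSet_mono hcD <| by
    rwa [Subgraph.edgeSet_spanningCoe, Walk.mem_edges_toSubgraph]
  rcases mem_edgeSet_symmDiff.mp heD with ⟨-, he⟩ | ⟨-, he⟩
  · exact he (hSM' heS)
  · exact he (hS heS)

end SimpleGraph

/-- A subset `S ⊆ M` is a forcing set of the perfect matching `M` iff every
`M`-alternating cycle of `G` contains an edge of `S`. -/
theorem forcing_iff_meets_all_alternating_cycles {V : Type*} [Fintype V]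
    (G : SimpleGraph V) (M S : Set (Sym2 V))
    (hM : IsPMOn G Set.univ M) (hS : S ⊆ M) :
    IsForcingOn G Set.univ M S ↔
      ∀ (v : V) (c : G.Walk v v), IsAltCycle G M c → ∃ e ∈ c.edges, e ∈ S := by
  obtain ⟨H, rfl⟩ := exists_edgeSet_eq_of_subset_edgeSet hM.1
  obtain ⟨hHG, hH⟩ := isPMOn_univ_edgeSet_iff.mp hM
  simp only [isAltCycle_edgeSet_iff, and_imp]
  exact ⟨fun hforce _ _ hc halt => exists_mem_edges_mem_of_isForcingOn hHG hH hforce hc halt,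
    isForcingOn_of_forall_exists_mem_edges_mem hHG hH hS⟩
end

section
/- Let G be a graph with a perfect matching M. If S ⊆ M is a forcing set of M, then |S| is at least the maximum number of pairwise vertex-disjoint M-alternating cycles of G. -/
open SimpleGraph

section Aux

variable {V : Type*} {G : SimpleGraph V}

variable {V : Type*} {G : SimpleGraph V}

lemma edges_getElem' {u w : V} (p : G.Walk u w) (j : ℕ) (hj : j < p.length) :
    p.edges[j]'(by simpa using hj) = s(p.getVert j, p.getVert (j+1)) := by
  induction p generalizing j with
  | nil => simp at hj
  | cons h q ih =>
    cases j with
    | zero => simp [SimpleGraph.Walk.getVert]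
    | succ j =>
      simp only [SimpleGraph.Walk.edges_cons, List.getElem_cons_succ]
      exact ih j (by simpa using hj)

example {u w : V} (p : G.Walk u w) : p.edges.length = p.length := p.length_edges

lemma mem_support_of_mem_edges' {u w x : V} (p : G.Walk u w) {e : Sym2 V}
    (he : e ∈ p.edges) (hx : x ∈ e) : x ∈ p.support := by
  induction e with
  | _ a b =>
    rcases Sym2.mem_iff.mp hx with rfl | rfl
    · exact p.fst_mem_support_of_mem_edges he
    · exact p.snd_mem_support_of_mem_edges he

lemma support_getElem' {u w : V} (p : G.Walk u w) (j : ℕ) (hj : j < p.length + 1) :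
    p.support[j]'(by simpa [p.length_support] using hj) = p.getVert j := by
  induction p generalizing j with
  | nil =>
    have : j = 0 := by simpa using hj
    subst this; simp [SimpleGraph.Walk.getVert]
  | cons h q ih =>
    cases j with
    | zero => simp [SimpleGraph.Walk.getVert]
    | succ j =>
      simp only [SimpleGraph.Walk.support_cons, List.getElem_cons_succ]
      exact ih j (by simpa using hj)

lemma getVert_inj' {v : V} {c : G.Walk v v} (hc : c.IsCycle) {i j : ℕ}
    (hi1 : 1 ≤ i) (hi : i ≤ c.length) (hj1 : 1 ≤ j) (hj : j ≤ c.length)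
    (h : c.getVert i = c.getVert j) : i = j := by
  have hnd := hc.2
  have hlen : c.support.tail.length = c.length := by
    simp [c.length_support]
  have h1 : c.support.tail[i-1]'(by omega) = c.getVert (i - 1 + 1) := by
    rw [List.getElem_tail]
    exact support_getElem' c (i - 1 + 1) (by omega)
  have h2 : c.support.tail[j-1]'(by omega) = c.getVert (j - 1 + 1) := by
    rw [List.getElem_tail]
    exact support_getElem' c (j - 1 + 1) (by omega)
  rw [show i - 1 + 1 = i by omega] at h1
  rw [show j - 1 + 1 = j by omega] at h2
  have := hnd.getElem_inj_iff.mp (h1.trans (h.trans h2.symm))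
  omega

lemma alt_incidence {M : Set (Sym2 V)} {v : V} {c : G.Walk v v} (h : IsAltCycle G M c)
    {x : V} (hx : x ∈ c.support) :
    ∃ e f, e ∈ c.edges ∧ f ∈ c.edges ∧ x ∈ e ∧ x ∈ f ∧ e ∈ M ∧ f ∉ M ∧
      ∀ g ∈ c.edges, x ∈ g → g = e ∨ g = f := by
  obtain ⟨hc, hchain, hwrap⟩ := h
  have hk3 : 3 ≤ c.length := hc.three_le_length
  have hElen : c.edges.length = c.length := c.length_edges
  have hne : c.edges ≠ [] := by
    intro hnil; rw [hnil] at hElen; simp at hElen; omega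
  obtain ⟨i, hgi, hik⟩ := SimpleGraph.Walk.mem_support_iff_exists_getVert.mp hx
  by_cases hxv : x = v
  · -- endpoint case: edges 0 and length - 1
    have h0mem : x ∈ c.edges[0]'(by omega) := by
      rw [edges_getElem' c 0 (by omega)]
      subst hxv
      simp [SimpleGraph.Walk.getVert_zero]
    have hlmem : x ∈ c.edges[c.length - 1]'(by omega) := by
      have := edges_getElem' c (c.length - 1) (by omega)
      rw [show c.length - 1 + 1 = c.length by omega] at this
      rw [this, SimpleGraph.Walk.getVert_length]
      subst hxv; simp
    have hopp : c.edges[c.length - 1]'(by omega) ∈ M ↔ c.edges[0]'(by omega) ∉ M := by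
      apply hwrap
      · rw [List.head?_eq_head hne, List.head_eq_getElem]
      · rw [List.getLast?_eq_getLast_of_ne_nil hne, List.getLast_eq_getElem]
        simp only [hElen]
    have huniq : ∀ g ∈ c.edges, x ∈ g →
        g = c.edges[0]'(by omega) ∨ g = c.edges[c.length - 1]'(by omega) := by
      intro g hg hxg
      obtain ⟨j, hj, hgj⟩ := List.mem_iff_getElem.mp hg
      rw [edges_getElem' c j (by omega)] at hgj
      subst hgj
      rcases Sym2.mem_iff.mp hxg with h1 | h1
      · rcases Nat.eq_zero_or_pos j with rfl | hj1
        · left; rw [edges_getElem' c 0 (by omega)]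
        · exfalso
          have : j = c.length := by
            apply getVert_inj' hc hj1 (by omega) (by omega) le_rfl
            rw [← h1, SimpleGraph.Walk.getVert_length, hxv]
          omega
      · right
        have hjk : j + 1 = c.length := by
          apply getVert_inj' hc (by omega) (by omega) (by omega) le_rfl
          rw [← h1, SimpleGraph.Walk.getVert_length, hxv]
        have := edges_getElem' c (c.length - 1) (by omega)
        rw [show c.length - 1 + 1 = c.length by omega] at this
        rw [this, show c.length = j + 1 from hjk.symm]
        simp [show j + 1 - 1 = j by omega]
    by_cases hm : c.edges[0]'(by omega) ∈ M
    · exact ⟨_, _, List.getElem_mem _, List.getElem_mem _, h0mem, hlmem, hm,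
        fun hmm => (hopp.mp hmm) hm, fun g hg hxg => huniq g hg hxg⟩
    · exact ⟨_, _, List.getElem_mem _, List.getElem_mem _, hlmem, h0mem, hopp.mpr hm, hm,
        fun g hg hxg => (huniq g hg hxg).symm⟩
  · -- interior case
    have hi1 : 1 ≤ i := by
      rcases Nat.eq_zero_or_pos i with rfl | h1
    -- i = 0 gives x = v
      · exact absurd (by rw [← hgi, SimpleGraph.Walk.getVert_zero]) hxv
      · exact h1
    have hik' : i < c.length := by
      rcases lt_or_eq_of_le hik with h1 | rfl
      · exact h1
      · exact absurd (by rw [← hgi, SimpleGraph.Walk.getVert_length]) hxv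
    have he1 : c.edges[i - 1]'(by omega) = s(c.getVert (i-1), c.getVert i) := by
      have := edges_getElem' c (i - 1) (by omega)
      rwa [show i - 1 + 1 = i by omega] at this
    have h1mem : x ∈ c.edges[i - 1]'(by omega) := by
      rw [he1, ← hgi]; simp
    have h2mem : x ∈ c.edges[i]'(by omega) := by
      rw [edges_getElem' c i (by omega), ← hgi]; simp
    have hopp : c.edges[i - 1]'(by omega) ∈ M ↔ c.edges[i]'(by omega) ∉ M := by
      have := List.isChain_iff_getElem.mp hchain (i - 1) (by omega)
      simp only [List.get_eq_getElem, show i - 1 + 1 = i from by omega] at this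
      exact this
    have huniq : ∀ g ∈ c.edges, x ∈ g →
        g = c.edges[i]'(by omega) ∨ g = c.edges[i - 1]'(by omega) := by
      intro g hg hxg
      obtain ⟨j, hj, hgj⟩ := List.mem_iff_getElem.mp hg
      rw [edges_getElem' c j (by omega)] at hgj
      subst hgj
      rcases Sym2.mem_iff.mp hxg with h1 | h1
      · have hj1 : 1 ≤ j := by
          rcases Nat.eq_zero_or_pos j with rfl | h2
          · exact absurd (h1.trans (c.getVert_zero)) hxv
          · exact h2
        have : j = i := getVert_inj' hc hj1 (by omega) hi1 (by omega) (by rw [← h1, hgi])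
        subst this
        left; rw [edges_getElem' c j (by omega)]
      · have : j + 1 = i := getVert_inj' hc (by omega) (by omega) hi1 (by omega)
          (by rw [← h1, hgi])
        right
        rw [he1, ← this]
        simp [show j + 1 - 1 = j by omega]
    by_cases hm : c.edges[i - 1]'(by omega) ∈ M
    · exact ⟨_, _, List.getElem_mem _, List.getElem_mem _, h1mem, h2mem, hm, hopp.mp hm,
        fun g hg hxg => (huniq g hg hxg).symm⟩
    · exact ⟨_, _, List.getElem_mem _, List.getElem_mem _, h2mem, h1mem,
        not_not.mp (fun h2 => hm (hopp.mpr h2)), hm, fun g hg hxg => huniq g hg hxg⟩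

lemma exists_forcing_edge {M S : Set (Sym2 V)}
    (hM : IsPMOn G Set.univ M) (hS : IsForcingOn G Set.univ M S)
    {v : V} {c : G.Walk v v} (hc : IsAltCycle G M c) :
    ∃ e ∈ S, e ∈ c.edges := by
  by_contra hcon
  push_neg at hcon
  obtain ⟨hMe, -, hMp, hMc⟩ := hM
  have hMuniq : ∀ e ∈ M, ∀ f ∈ M, ∀ x, x ∈ e → x ∈ f → e = f := by
    intro e he f hf x hxe hxf
    by_contra hne
    exact hMp he hf hne x hxe hxf
  set C : Set (Sym2 V) := {e | e ∈ c.edges} with hC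
  set M' : Set (Sym2 V) := (M \ C) ∪ (C \ M) with hM'
  have hPM : IsPMOn G Set.univ M' := by
    refine ⟨?_, fun _ _ _ _ => trivial, ?_, ?_⟩
    · intro e he
      rcases he with ⟨he, -⟩ | ⟨he, -⟩
      · exact hMe he
      · exact c.edges_subset_edgeSet he
    · intro e he f hf hne x hxe hxf
      rcases he with ⟨heM, heC⟩ | ⟨heC, heM⟩ <;> rcases hf with ⟨hfM, hfC⟩ | ⟨hfC, hfM⟩
      · exact hMp heM hfM hne x hxe hxf
      · have hxs : x ∈ c.support := mem_support_of_mem_edges' c hfC hxf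
        obtain ⟨eK, fK, heK, -, hxeK, -, heKM, -, -⟩ := alt_incidence hc hxs
        exact heC (by rw [hMuniq e heM eK heKM x hxe hxeK]; exact heK)
      · have hxs : x ∈ c.support := mem_support_of_mem_edges' c heC hxe
        obtain ⟨eK, fK, heK, -, hxeK, -, heKM, -, -⟩ := alt_incidence hc hxs
        exact hfC (by rw [hMuniq f hfM eK heKM x hxf hxeK]; exact heK)
      · have hxs : x ∈ c.support := mem_support_of_mem_edges' c heC hxe
        obtain ⟨eK, fK, -, -, -, -, heKM, -, huniq⟩ := alt_incidence hc hxs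
        have h1 : e = fK := by
          rcases huniq e heC hxe with h | h
          · exact absurd (h ▸ heM) (fun h2 => heM (h ▸ heKM))
          · exact h
        have h2 : f = fK := by
          rcases huniq f hfC hxf with h | h
          · exact absurd (h ▸ heKM) (h ▸ hfM)
          · exact h
        exact hne (h1.trans h2.symm)
    · intro x _hx
      by_cases hx : x ∈ c.support
      · obtain ⟨eK, fK, -, hfC, -, hxf, -, hfM, -⟩ := alt_incidence hc hx
        exact ⟨fK, Or.inr ⟨hfC, hfM⟩, hxf⟩
      · obtain ⟨e, heM, hxe⟩ := hMc x trivial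
        exact ⟨e, Or.inl ⟨heM, fun heC => hx (mem_support_of_mem_edges' c heC hxe)⟩, hxe⟩
  have hSM' : S ⊆ M' := by
    intro e heS
    exact Or.inl ⟨hS.1 heS, hcon e heS⟩
  have hEq : M' = M := hS.2 M' hPM hSM'
  have hne : c.edges ≠ [] := by
    have h3 := hc.1.three_le_length
    intro hnil
    have := c.length_edges
    rw [hnil] at this
    simp at this
    omega
  have h0C : c.edges.head hne ∈ C := List.head_mem hne
  by_cases hm : c.edges.head hne ∈ M
  · have : c.edges.head hne ∉ M' := by
      rintro (⟨-, h⟩ | ⟨-, h⟩)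
      · exact h h0C
      · exact h hm
    exact this (hEq ▸ hm)
  · have : c.edges.head hne ∈ M' := Or.inr ⟨h0C, hm⟩
    exact hm (hEq ▸ this)

end Aux

/-- The size of any forcing set is at least the number of cycles in any family of
pairwise vertex-disjoint `M`-alternating cycles. -/
theorem forcing_set_card_ge_disjoint_alt_cycles {V : Type*} [Fintype V]
    (G : SimpleGraph V) (M S : Set (Sym2 V))
    (hM : IsPMOn G Set.univ M) (hS : IsForcingOn G Set.univ M S)
    (n : ℕ) (v : Fin n → V) (c : ∀ i, G.Walk (v i) (v i))
    (halt : ∀ i, IsAltCycle G M (c i))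
    (hdisj : ∀ i j, i ≠ j → ∀ x, x ∈ (c i).support → x ∉ (c j).support) :
    n ≤ S.ncard := by
  by_contra hlt
  push_neg at hlt
  -- choose an edge of S on each cycle
  have hch : ∀ i, ∃ e, e ∈ S ∧ e ∈ (c i).edges := by
    intro i
    obtain ⟨e, h1, h2⟩ := exists_forcing_edge hM hS (halt i)
    exact ⟨e, h1, h2⟩
  choose e he1 he2 using hch
  have hinj : Function.Injective e := by
    intro i j hij
    by_contra hne
    obtain ⟨y, hy⟩ : ∃ y, y ∈ e i := by
      induction e i using Sym2.ind with
      | _ a b => exact ⟨a, by simp⟩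
    have hyi : y ∈ (c i).support := mem_support_of_mem_edges' (c i) (he2 i) hy
    have hyj : y ∈ (c j).support := mem_support_of_mem_edges' (c j) (he2 j) (hij ▸ hy)
    exact hdisj i j hne y hyi hyj
  have hsub : Set.range e ⊆ S := by
    rintro x ⟨i, rfl⟩
    exact he1 i
  have h1 : (Set.range e).ncard = n := by
    rw [← Set.image_univ, Set.ncard_image_of_injective _ hinj, Set.ncard_univ,
      Nat.card_eq_fintype_card, Fintype.card_fin]
  have := Set.ncard_le_ncard hsub S.toFinite
  omega
end

section
/- Let G be a graph with a perfect matching M, let S be a minimum forcing set of M, and let S' ⊆ S. Then f(G,M) = f(G − V(S'), M \ S') + |S'|, where f denotes the forcing number (minimum size of a forcing set). -/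
open SimpleGraph

lemma Sym2.exists_mem' {V : Type*} (e : Sym2 V) : ∃ v, v ∈ e := by
  induction e using Sym2.ind with
  | _ a b => exact ⟨a, Sym2.mem_mk_left a b⟩

lemma pm_diff {V : Type*} (G : SimpleGraph V) (M' S' : Set (Sym2 V))
    (h : IsPMOn G Set.univ M') (hsub : S' ⊆ M') :
    IsPMOn G (delVerts S') (M' \ S') := by
  obtain ⟨h1, h2, h3, h4⟩ := h
  refine ⟨fun e he => h1 he.1, ?_, h3.mono Set.diff_subset, ?_⟩
  · intro e he v hv f hf
    exact h3 he.1 (hsub hf) (fun hef => he.2 (hef ▸ hf)) v hv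
  · intro v hv
    obtain ⟨e, he, hve⟩ := h4 v trivial
    exact ⟨e, ⟨he, fun heS' => hv e heS' hve⟩, hve⟩

lemma pm_union {V : Type*} (G : SimpleGraph V) (M M' S' : Set (Sym2 V))
    (hM : IsPMOn G Set.univ M) (hS'M : S' ⊆ M)
    (h : IsPMOn G (delVerts S') M') :
    IsPMOn G Set.univ (M' ∪ S') := by
  obtain ⟨h1, h2, h3, h4⟩ := h
  obtain ⟨hM1, hM2, hM3, hM4⟩ := hM
  refine ⟨?_, fun _ _ _ _ => trivial, ?_, ?_⟩
  · exact Set.union_subset h1 (fun e he => hM1 (hS'M he))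
  · intro e he f hf hef v hv
    rcases he with he | he <;> rcases hf with hf | hf
    · exact h3 he hf hef v hv
    · exact h2 e he v hv f hf
    · intro hvf
      exact (h2 f hf v hvf) e he hv
    · exact hM3 (hS'M he) (hS'M hf) hef v hv
  · intro v _
    by_cases hv : v ∈ delVerts S'
    · obtain ⟨e, he, hve⟩ := h4 v hv
      exact ⟨e, Or.inl he, hve⟩
    · simp only [delVerts, Set.mem_setOf_eq, not_forall] at hv
      obtain ⟨e, he, hve⟩ := hv
      exact ⟨e, Or.inr he, not_not.mp hve⟩

/-- If `S` is a minimum forcing set of `M` and `S' ⊆ S`, then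
`f(G,M) = f(G − V(S'), M \ S') + |S'|`. -/
theorem forcingNum_deletion_of_subset_min_forcing {V : Type*} [Fintype V]
    (G : SimpleGraph V) (M S S' : Set (Sym2 V))
    (hM : IsPMOn G Set.univ M)
    (hS : IsForcingOn G Set.univ M S)
    (hmin : S.ncard = forcingNumOn G Set.univ M)
    (hS' : S' ⊆ S) :
    forcingNumOn G Set.univ M =
      forcingNumOn G (delVerts S') (M \ S') + S'.ncard := by
  obtain ⟨hSsub, hSforce⟩ := hS
  have hS'M : S' ⊆ M := hS'.trans hSsub
  -- S \ S' is a forcing set of M \ S' on delVerts S'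
  have hforce1 : IsForcingOn G (delVerts S') (M \ S') (S \ S') := by
    refine ⟨fun e he => ⟨hSsub he.1, he.2⟩, ?_⟩
    intro M'' hM'' hsub''
    have hPM : IsPMOn G Set.univ (M'' ∪ S') := pm_union G M M'' S' hM hS'M hM''
    have hSsub2 : S ⊆ M'' ∪ S' := by
      intro e he
      by_cases h : e ∈ S'
      · exact Or.inr h
      · exact Or.inl (hsub'' ⟨he, h⟩)
    have heq := hSforce (M'' ∪ S') hPM hSsub2
    ext e
    constructor
    · intro he
      refine ⟨heq ▸ Or.inl he, fun heS' => ?_⟩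
      obtain ⟨v, hv⟩ := Sym2.exists_mem' e
      exact (hM''.2.1 e he v hv) e heS' hv
    · rintro ⟨heM, heS'⟩
      rw [← heq] at heM
      rcases heM with h | h
      · exact h
      · exact absurd h heS'
  have h1 : forcingNumOn G (delVerts S') (M \ S') ≤ S.ncard - S'.ncard := by
    have h1' : forcingNumOn G (delVerts S') (M \ S') ≤ (S \ S').ncard :=
      Nat.sInf_le ⟨S \ S', hforce1, rfl⟩
    rwa [Set.ncard_diff hS'] at h1'
  obtain ⟨T, hTforce, hTcard⟩ := Nat.sInf_mem
    (⟨(S \ S').ncard, S \ S', hforce1, rfl⟩ :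
      {n | ∃ T, IsForcingOn G (delVerts S') (M \ S') T ∧ T.ncard = n}.Nonempty)
  have hforce2 : IsForcingOn G Set.univ M (T ∪ S') := by
    refine ⟨Set.union_subset (fun e he => (hTforce.1 he).1) hS'M, ?_⟩
    intro M₂ hM₂ hsub₂
    have hS'M₂ : S' ⊆ M₂ := (Set.subset_union_right).trans hsub₂
    have hPMdel : IsPMOn G (delVerts S') (M₂ \ S') := pm_diff G M₂ S' hM₂ hS'M₂
    have hTsub : T ⊆ M₂ \ S' := fun e he =>
      ⟨hsub₂ (Or.inl he), (hTforce.1 he).2⟩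
    have heq := hTforce.2 (M₂ \ S') hPMdel hTsub
    ext e
    constructor
    · intro he
      by_cases h : e ∈ S'
      · exact hS'M h
      · have hh : e ∈ M₂ \ S' := ⟨he, h⟩
        rw [heq] at hh
        exact hh.1
    · intro he
      by_cases h : e ∈ S'
      · exact hS'M₂ h
      · have hh : e ∈ M \ S' := ⟨he, h⟩
        rw [← heq] at hh
        exact hh.1
  have h2 : forcingNumOn G Set.univ M ≤ (T ∪ S').ncard :=
    Nat.sInf_le ⟨T ∪ S', hforce2, rfl⟩
  have h3 : (T ∪ S').ncard ≤ T.ncard + S'.ncard := Set.ncard_union_le T S'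
  have h4 : S'.ncard ≤ S.ncard := Set.ncard_le_ncard hS' S.toFinite
  have hTcard' : T.ncard = forcingNumOn G (delVerts S') (M \ S') := hTcard
  omega
end

section
/- Let G be a graph with a perfect matching M, and let 𝒞 be a set of pairwise vertex-disjoint M-alternating cycles of G. Let S ⊆ M consist of exactly one M-edge from each cycle in 𝒞. If every edge of M lying on a cycle of 𝒞 other than those in S belongs to every perfect matching of G − V(S), then S is contained in some minimum forcing set of M. -/
/-!
Every forcing set `F` of `M` contains an edge of each `M`-alternating cycle `C`: otherwise `F`
also lies in the perfect matching `M ∆ E(C)`. Take `F` minimum and pick such an edge `fᵢ ∈ F` on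
each `Cᵢ`; the `fᵢ` are distinct because the cycles are disjoint. Trading them for `S` gives
`T = (F \ {fᵢ}) ∪ S` with `|T| ≤ |F|`. A perfect matching `M' ⊇ T` restricts to the perfect
matching `M' \ S` of `G − V(S)`, which by hypothesis contains every `fᵢ ∉ S`; so `F ⊆ M'`, hence
`M' = M`, and `T` is a minimum forcing set containing `S`.
-/

open SimpleGraph

open scoped symmDiff

theorem Set.ncard_diff_union_le {α : Type*} {F R S : Set α} (hF : F.Finite) (hRF : R ⊆ F)
    (hSR : S.ncard ≤ R.ncard) : (F \ R ∪ S).ncard ≤ F.ncard :=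
  calc (F \ R ∪ S).ncard ≤ (F \ R).ncard + S.ncard := Set.ncard_union_le _ _
    _ = F.ncard - R.ncard + S.ncard := by rw [Set.ncard_sdiff hRF (hF.subset hRF)]
    _ ≤ F.ncard := by have := Set.ncard_le_ncard hRF hF; omega

theorem injective_of_mem_edges_of_disjoint {V ι : Type*} {G : SimpleGraph V} {v : ι → V}
    {c : ∀ i, G.Walk (v i) (v i)}
    (hdisj : ∀ i j, i ≠ j → ∀ x, x ∈ (c i).support → x ∉ (c j).support)
    {f : ι → Sym2 V} (hf : ∀ i, f i ∈ (c i).edges) : Function.Injective f := by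
  intro i j hij
  by_contra hne
  induction hfi : f i with
  | _ x y =>
    have hi : s(x, y) ∈ (c i).edges := hfi ▸ hf i
    have hj : s(x, y) ∈ (c j).edges := by rw [← hfi, hij]; exact hf j
    exact hdisj i j hne x ((c i).fst_mem_support_of_mem_edges hi)
      ((c j).fst_mem_support_of_mem_edges hj)

section

variable {V : Type*} {G : SimpleGraph V} {A : Set V} {M : Set (Sym2 V)}
  {u : V} {c : G.Walk u u}

theorem isPMOn_univ_iff :
    IsPMOn G Set.univ M ↔ M ⊆ G.edgeSet ∧ ∀ v, ∃! w, (fromEdgeSet M).Adj v w := by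
  refine ⟨fun ⟨hMG, _, hdisj, hcover⟩ => ⟨hMG, fun v => ?_⟩,
    fun ⟨hMG, hunique⟩ => ⟨hMG, fun _ _ _ _ => trivial, ?_, fun v _ => ?_⟩⟩
  · obtain ⟨e, heM, hve⟩ := hcover v trivial
    obtain ⟨w, rfl⟩ := Sym2.mem_iff_exists.mp hve
    refine ⟨w, ⟨heM, (hMG heM).ne⟩, fun y (hy : s(v, y) ∈ M ∧ v ≠ y) => ?_⟩
    by_contra hyw
    exact hdisj hy.1 heM (fun h => hyw (Sym2.congr_right.mp h)) v
      (Sym2.mem_mk_left v y) (Sym2.mem_mk_left v w)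
  · intro e he f hf hef v hve hvf
    obtain ⟨w, rfl⟩ := Sym2.mem_iff_exists.mp hve
    obtain ⟨y, rfl⟩ := Sym2.mem_iff_exists.mp hvf
    have hw : (fromEdgeSet M).Adj v w := ⟨he, (hMG he).ne⟩
    have hy : (fromEdgeSet M).Adj v y := ⟨hf, (hMG hf).ne⟩
    exact hef (by rw [(hunique v).unique hw hy])
  · obtain ⟨w, hw, -⟩ := hunique v
    exact ⟨s(v, w), hw.1, Sym2.mem_mk_left v w⟩

theorem IsPMOn.eq_of_subset {M' : Set (Sym2 V)} (hM : IsPMOn G A M)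
    (hM' : IsPMOn G A M') (h : M ⊆ M') : M' = M := by
  refine Set.Subset.antisymm (fun e he => ?_) h
  induction e with
  | _ a b =>
    obtain ⟨f, hfM, haf⟩ := hM.2.2.2 a (hM'.2.1 _ he a (Sym2.mem_mk_left a b))
    by_contra hne
    exact hM'.2.2.1 he (h hfM) (fun hef => hne (hef ▸ hfM)) a (Sym2.mem_mk_left a b) haf

theorem IsPMOn.diff_of_subset {S : Set (Sym2 V)} (hM : IsPMOn G A M)
    (hS : S ⊆ M) : IsPMOn G (A ∩ delVerts S) (M \ S) := by
  obtain ⟨hMG, hMA, hdisj, hcover⟩ := hM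
  refine ⟨fun e he => hMG he.1, fun e he v hve => ⟨hMA e he.1 v hve, fun f hf hvf => ?_⟩,
    hdisj.mono Set.sdiff_subset, fun v ⟨hvA, hvS⟩ => ?_⟩
  · exact hdisj (hS hf) he.1 (fun hfe => he.2 (hfe ▸ hf)) v hvf hve
  · obtain ⟨e, heM, hve⟩ := hcover v hvA
    exact ⟨e, ⟨heM, fun heS => hvS e heS hve⟩, hve⟩

theorem IsAltCycle.exists_neighborSet_eq_pair (hc : IsAltCycle G M c) {v : V}
    (hv : v ∈ c.support) :
    ∃ a b, c.toSubgraph.neighborSet v = {a, b} ∧ (s(v, a) ∈ M ↔ s(v, b) ∉ M) := by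
  obtain ⟨hcyc, hchain, hwrap⟩ := hc
  obtain ⟨k, rfl, hk⟩ := Walk.mem_support_iff_exists_getVert.mp hv
  by_cases hend : k = 0 ∨ k = c.length
  · have hstart : c.getVert k = u := by rcases hend with rfl | rfl <;> simp
    have hne : c.edges ≠ [] := Walk.edges_eq_nil.not.mpr hcyc.not_nil
    rw [hstart]
    refine ⟨c.snd, c.penultimate, hcyc.neighborSet_toSubgraph_endpoint, ?_⟩
    have := hwrap _ _ (List.head?_eq_some_head hne) (List.getLast?_eq_some_getLast hne)
    rw [Walk.head_edges_eq_mk_start_snd, Walk.getLast_edges_eq_mk_penultimate_end,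
      Sym2.eq_swap] at this
    tauto
  · push Not at hend
    have hk' : k < c.length := lt_of_le_of_ne hk hend.2
    refine ⟨c.getVert (k - 1), c.getVert (k + 1),
      hcyc.neighborSet_toSubgraph_internal hend.1 hk', ?_⟩
    have := List.isChain_iff_getElem.mp hchain (k - 1) (by simp; omega)
    rw [Walk.getElem_edges, Walk.getElem_edges, Nat.sub_add_cancel (Nat.pos_of_ne_zero hend.1),
      Sym2.eq_swap] at this
    exact this

theorem IsAltCycle.isAlternating (hc : IsAltCycle G M c) :
    c.toSubgraph.spanningCoe.IsAlternating (fromEdgeSet M) := by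
  intro v w w' hww' hw hw'
  obtain ⟨a, b, hab, halt⟩ :=
    hc.exists_neighborSet_eq_pair (c.mem_verts_toSubgraph.mp (c.toSubgraph.edge_vert hw))
  have hw_mem : w ∈ c.toSubgraph.neighborSet v := hw
  have hw'_mem : w' ∈ c.toSubgraph.neighborSet v := hw'
  simp only [fromEdgeSet_adj, hw.ne, hw'.ne, ne_eq, not_false_eq_true, and_true]
  rw [hab] at hw_mem hw'_mem
  rcases hw_mem with rfl | rfl <;> rcases hw'_mem with rfl | rfl <;> tauto

theorem IsPMOn.symmDiff_edgeSet (hM : IsPMOn G Set.univ M) (hc : IsAltCycle G M c) :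
    IsPMOn G Set.univ (M ∆ c.edgeSet) := by
  rw [isPMOn_univ_iff] at hM ⊢
  refine ⟨fun e he => ?_, fun v => ?_⟩
  · rcases he with ⟨he, -⟩ | ⟨he, -⟩
    exacts [hM.1 he, c.edges_subset_edgeSet he]
  have hflip := Subgraph.IsPerfectMatching.symmDiff_of_isAlternating
    (M := (⊤ : Subgraph (fromEdgeSet M))) (Subgraph.isPerfectMatching_iff.mpr hM.2)
    hc.isAlternating hc.1.isCycles_spanningCoe_toSubgraph
  have hgraph : fromEdgeSet (M ∆ c.edgeSet) = fromEdgeSet M ∆ c.toSubgraph.spanningCoe := by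
    ext x y
    have hne : s(x, y) ∈ c.edges → x ≠ y := fun h => (c.adj_of_mem_edges h).ne
    simp only [fromEdgeSet_adj, Set.mem_symmDiff, Walk.mem_edgeSet]
    simp only [symmDiff_def, sup_adj, sdiff_adj, fromEdgeSet_adj, Subgraph.spanningCoe_adj,
      Walk.adj_toSubgraph_iff_mem_edges]
    tauto
  rw [hgraph]
  exact Subgraph.isPerfectMatching_iff.mp hflip v

theorem IsPMOn.isForcingOn_self (hM : IsPMOn G A M) : IsForcingOn G A M M :=
  ⟨subset_rfl, fun _ hM' h => hM.eq_of_subset hM' h⟩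

theorem IsPMOn.exists_isForcingOn_ncard_eq (hM : IsPMOn G A M) :
    ∃ F, IsForcingOn G A M F ∧ F.ncard = forcingNumOn G A M :=
  Nat.sInf_mem (s := {n | ∃ S, IsForcingOn G A M S ∧ S.ncard = n})
    ⟨_, M, hM.isForcingOn_self, rfl⟩

theorem IsForcingOn.ncard_eq_of_ncard_le {F T : Set (Sym2 V)}
    (hF : F.ncard = forcingNumOn G A M) (hT : IsForcingOn G A M T) (hTF : T.ncard ≤ F.ncard) :
    T.ncard = forcingNumOn G A M :=
  le_antisymm (hF ▸ hTF) (Nat.sInf_le ⟨T, hT, rfl⟩)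

theorem IsForcingOn.exists_mem_edges {F : Set (Sym2 V)} (hM : IsPMOn G Set.univ M)
    (hF : IsForcingOn G Set.univ M F) (hc : IsAltCycle G M c) :
    ∃ e ∈ F, e ∈ c.edges := by
  by_contra! hdisj
  have hflip : M ∆ c.edgeSet = M :=
    hF.2 _ (hM.symmDiff_edgeSet hc) fun e he => Or.inl ⟨hF.1 he, hdisj e he⟩
  have hempty : c.edgeSet = ∅ := symmDiff_eq_left.mp hflip
  exact hempty.subset (c.mk_start_snd_mem_edges hc.1.not_nil)

theorem IsForcingOn.diff_union {F R S : Set (Sym2 V)} (hF : IsForcingOn G A M F)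
    (hSM : S ⊆ M) (hR : ∀ M', IsPMOn G A M' → F \ R ∪ S ⊆ M' → R ⊆ M') :
    IsForcingOn G A M (F \ R ∪ S) := by
  refine ⟨Set.union_subset (Set.sdiff_subset.trans hF.1) hSM, fun M' hM' hT => hF.2 M' hM' ?_⟩
  intro e he
  by_cases heR : e ∈ R
  exacts [hR M' hM' hT heR, hT (Or.inl ⟨he, heR⟩)]

end

theorem subset_of_min_forcing_set_general {V : Type*} [Fintype V]
    (G : SimpleGraph V) (M : Set (Sym2 V)) (hM : IsPMOn G Set.univ M)
    (n : ℕ) (v : Fin n → V) (c : ∀ i, G.Walk (v i) (v i))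
    (halt : ∀ i, IsAltCycle G M (c i))
    (hdisj : ∀ i j, i ≠ j → ∀ x, x ∈ (c i).support → x ∉ (c j).support)
    (s : Fin n → Sym2 V) (hsM : ∀ i, s i ∈ M)
    (S : Set (Sym2 V)) (hS : S = Set.range s)
    (hdef : ∀ i, ∀ e ∈ (c i).edges, e ∈ M → e ∉ S →
      ∀ M', IsPMOn G (delVerts S) M' → e ∈ M') :
    ∃ T, IsForcingOn G Set.univ M T ∧ T.ncard = forcingNumOn G Set.univ M ∧
      S ⊆ T := by
  obtain ⟨F, hF, hFmin⟩ := hM.exists_isForcingOn_ncard_eq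
  choose f hfF hfc using fun i => hF.exists_mem_edges hM (halt i)
  have hSM : S ⊆ M := hS ▸ Set.range_subset_iff.mpr hsM
  have hT : IsForcingOn G Set.univ M (F \ Set.range f ∪ S) := by
    refine hF.diff_union hSM fun M' hM' hTM' => Set.range_subset_iff.mpr fun i => ?_
    by_cases hfS : f i ∈ S
    · exact hTM' (Or.inr hfS)
    · have hM'S := hM'.diff_of_subset (Set.subset_union_right.trans hTM')
      rw [Set.univ_inter] at hM'S
      exact (hdef i (f i) (hfc i) (hF.1 (hfF i)) hfS _ hM'S).1
  have hcard : S.ncard ≤ (Set.range f).ncard := by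
    rw [Set.ncard_range_of_injective (injective_of_mem_edges_of_disjoint hdisj hfc), hS,
      ← Set.image_univ, ← Set.ncard_univ]
    exact Set.ncard_image_le
  refine ⟨_, hT, hT.ncard_eq_of_ncard_le hFmin ?_, Set.subset_union_right⟩
  exact Set.ncard_diff_union_le F.toFinite (Set.range_subset_iff.mpr hfF) hcard

/-- If `S` consists of exactly one `M`-edge from each cycle of a family of pairwise
disjoint `M`-alternating cycles, and all other `M`-edges on these cycles belong to
every perfect matching of `G − V(S)`, then `S` is contained in some minimum
forcing set of `M`. -/
theorem subset_of_min_forcing_set {V : Type*} [Fintype V]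
    (G : SimpleGraph V) (M : Set (Sym2 V)) (hM : IsPMOn G Set.univ M)
    (n : ℕ) (v : Fin n → V) (c : ∀ i, G.Walk (v i) (v i))
    (halt : ∀ i, IsAltCycle G M (c i))
    (hdisj : ∀ i j, i ≠ j → ∀ x, x ∈ (c i).support → x ∉ (c j).support)
    (s : Fin n → Sym2 V) (hsM : ∀ i, s i ∈ M) (hsc : ∀ i, s i ∈ (c i).edges)
    (S : Set (Sym2 V)) (hS : S = Set.range s)
    (hdef : ∀ i, ∀ e ∈ (c i).edges, e ∈ M → e ∉ S →
      ∀ M', IsPMOn G (delVerts S) M' → e ∈ M') :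
    ∃ T, IsForcingOn G Set.univ M T ∧ T.ncard = forcingNumOn G Set.univ M ∧
      S ⊆ T :=
  subset_of_min_forcing_set_general G M hM n v c halt hdisj s hsM S hS hdef
end

section
/- The number of perfect matchings of the truncated parallelogram CHS(k_1,...,k_m; 1,...,1) with 1 ≤ k_1 ≤ ... ≤ k_m equals the number of non-decreasing integer sequences (a_1,...,a_m) with 0 ≤ a_i ≤ k_i for each i. -/
/-!
Row `i` of hexagons of `truncPar m k` lies between the levels `y = -i` and `y = 1 - i` and spans
`i ≤ x ≤ i + 2 k_i`; its vertical edges are the `vertEdge (i + 2 s) (-i)` with `0 ≤ s ≤ k_i`.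

On every level of a perfect matching, the vertices not covered by vertical edges are matched by
horizontal edges along a path, so consecutive blocked points of the level (non-vertices and ends
of vertical edges) lie an odd distance apart. Going down from the top level, this forces row `i`
to contain exactly one vertical edge, at `x = i + 2 a_i`, with `a` monotone and `a_i ≤ k_i`.
Conversely, for every such `a` each level has a blocked set with odd gaps, which is matched in
exactly one way; so perfect matchings correspond bijectively to these sequences.
-/

open SimpleGraph

/-- The six vertices of the hexagon with bottom-left corner `c` in the
brick-wall representation of the hexagonal lattice. -/
def hexVerts (c : ℤ × ℤ) : Set (ℤ × ℤ) :=
  {(c.1, c.2), (c.1 + 1, c.2), (c.1 + 2, c.2),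
   (c.1, c.2 + 1), (c.1 + 1, c.2 + 1), (c.1 + 2, c.2 + 1)}

/-- Adjacency in the brick-wall hexagonal lattice: horizontal neighbours always,
vertical neighbours when the parity condition holds. -/
def brickAdj (u v : ℤ × ℤ) : Prop :=
  (u.2 = v.2 ∧ (u.1 = v.1 + 1 ∨ v.1 = u.1 + 1)) ∨
    (u.1 = v.1 ∧ ((u.2 = v.2 + 1 ∧ Even (u.1 + v.2)) ∨ (v.2 = u.2 + 1 ∧ Even (u.1 + u.2))))

/-- The hexagonal system determined by a set `H` of hexagon corners: the union of
the corresponding hexagons, as a subgraph of the hexagonal (brick-wall) lattice. -/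
def hexGraph (H : Set (ℤ × ℤ)) : SimpleGraph (ℤ × ℤ) :=
  SimpleGraph.fromRel fun u v =>
    brickAdj u v ∧ ∃ c ∈ H, u ∈ hexVerts c ∧ v ∈ hexVerts c

/-- Vertex set of the hexagonal system with hexagon set `H`. -/
def hexVertexSet (H : Set (ℤ × ℤ)) : Set (ℤ × ℤ) := ⋃ c ∈ H, hexVerts c

/-- Perfect matchings of the hexagonal system with hexagon set `H`. -/
def hexPM (H : Set (ℤ × ℤ)) (M : Set (Sym2 (ℤ × ℤ))) : Prop :=
  IsPMOn (hexGraph H) (hexVertexSet H) M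

/-- Forcing number of a perfect matching of a hexagonal system. -/
noncomputable def hexForcingNum (H : Set (ℤ × ℤ)) (M : Set (Sym2 (ℤ × ℤ))) : ℕ :=
  forcingNumOn (hexGraph H) (hexVertexSet H) M

/-- `hexOmega H i` is the number of perfect matchings with forcing number `i`,
i.e. the coefficient of `x^i` in the forcing polynomial. -/
noncomputable def hexOmega (H : Set (ℤ × ℤ)) (i : ℕ) : ℕ :=
  {M | hexPM H M ∧ hexForcingNum H M = i}.ncard

/-- The truncated parallelogram `CHS(k_1,…,k_m;1,…,1)`. -/
def truncPar (m : ℕ) (k : Fin m → ℕ) : Set (ℤ × ℤ) :=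
  {p | ∃ i : Fin m, ∃ j : ℕ, 1 ≤ j ∧ j ≤ k i ∧
    p = (2 * ((j : ℤ) - 1) + (i : ℤ), -(i : ℤ))}

/-- `P x` means that the edge `{x, x + 1}` of the integer line is used: `P` is a perfect matching
of the line with the points of `S` deleted. -/
def IsPathMatching (S : Set ℤ) (P : ℤ → Prop) : Prop :=
  ∀ x, ¬(P (x - 1) ∧ P x) ∧ (P (x - 1) ∨ P x ↔ x ∉ S)

namespace IsPathMatching

variable {S : Set ℤ} {P : ℤ → Prop}

theorem not_of_mem (h : IsPathMatching S P) {x : ℤ} (hx : x ∈ S) : ¬P (x - 1) ∧ ¬P x := by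
  have := (h x).2
  tauto

theorem iff_not_of_notMem (h : IsPathMatching S P) {x : ℤ} (hx : x ∉ S) :
    P x ↔ ¬P (x - 1) := by
  have := h x
  tauto

theorem iff_odd_of_gap (h : IsPathMatching S P) {s x : ℤ} (hs : s ∈ S) (hsx : s ≤ x)
    (hgap : ∀ y, s < y → y ≤ x → y ∉ S) : P x ↔ Odd (x - s) := by
  induction x, hsx using Int.leInduction with
  | base => simp [(h.not_of_mem hs).2]
  | succ x hsx ih =>
    rw [h.iff_not_of_notMem (hgap _ (by omega) le_rfl), add_sub_cancel_right,
      ih fun y h1 h2 => hgap y h1 (by omega), Int.odd_iff, Int.odd_iff]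
    omega

theorem odd_sub_of_gap (h : IsPathMatching S P) {s s' : ℤ} (hs : s ∈ S) (hs' : s' ∈ S)
    (hss' : s < s') (hgap : ∀ y, s < y → y < s' → y ∉ S) : Odd (s' - s) := by
  have hP := h.iff_odd_of_gap hs (x := s' - 1) (by omega) fun y h1 h2 => hgap y h1 (by omega)
  have hn := (h.not_of_mem hs').1
  rw [hP, Int.odd_iff] at hn
  rw [Int.odd_iff]
  omega

theorem exists_odd_between (h : IsPathMatching S P) {s t : ℤ} (hs : s ∈ S) (ht : t ∈ S)
    (hst : s < t) (heven : Even (t - s)) : ∃ u ∈ S, s < u ∧ u < t ∧ Odd (u - s) := by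
  obtain ⟨u, ⟨huS, hsu⟩, hleast⟩ := Int.exists_least_of_bdd (P := fun u => u ∈ S ∧ s < u)
    ⟨s, fun _ hu => hu.2.le⟩ ⟨t, ht, hst⟩
  have hodd := h.odd_sub_of_gap hs huS hsu fun y h1 h2 hy => by
    have := hleast y ⟨hy, h1⟩
    omega
  refine ⟨u, huS, hsu, (hleast t ⟨ht, hst⟩).lt_of_ne ?_, hodd⟩
  rintro rfl
  exact Int.not_even_iff_odd.2 hodd heven

/-- On a level of the hexagonal system, `p` will be the abscissa of the vertical edge of the row
above and `q` that of the only vertical edge of the row below. -/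
theorem exists_partner_of_window (h : IsPathMatching S P) {l p r : ℤ} (hl : l ∈ S) (hp : p ∈ S)
    (hr : r ∈ S) (hlp : l < p) (hpr : p < r) (hpl : Odd (p - l)) (hrp : Even (r - p))
    (hwin : ∀ u ∈ S, l < u → u < r → u ≠ p → Odd (u - p)) :
    ∃ q ∈ S, p < q ∧ q < r ∧ ∀ u ∈ S, l < u → u < r → u = p ∨ u = q := by
  obtain ⟨q, hqS, hpq, hqr, -⟩ := h.exists_odd_between hp hr hpr hrp
  have no_pair : ∀ u ∈ S, ∀ v ∈ S, l ≤ u → u < v → v < r → Even (v - u) → Odd (u - p) →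
      (p ≤ u ∨ v ≤ p) → False := by
    intro u hu v hv hlu huv hvr hvu hup hp'
    obtain ⟨w, hwS, huw, hwv, hwu⟩ := h.exists_odd_between hu hv huv hvu
    have := hwin w hwS (by omega) (by omega) (by omega)
    simp only [Int.odd_iff] at *
    omega
  refine ⟨q, hqS, hpq, hqr, fun u hu hlu hur => ?_⟩
  by_contra! hne
  have hup := hwin u hu hlu hur hne.1
  have hqp := hwin q hqS (by omega) hqr (by omega)
  rcases lt_trichotomy u p with hu' | rfl | hu'
  · exact no_pair l hl u hu le_rfl hlu hur
      (by simp only [Int.odd_iff, Int.even_iff] at *; omega)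
      (by simp only [Int.odd_iff] at *; omega) (Or.inr hu'.le)
  · exact hne.1 rfl
  · rcases hne.2.lt_or_gt with huq | hqu
    · exact no_pair u hu q hqS (by omega) huq hqr
        (by simp only [Int.odd_iff, Int.even_iff] at *; omega) hup (Or.inl hu'.le)
    · exact no_pair q hqS u hu (by omega) hqu hur
        (by simp only [Int.odd_iff, Int.even_iff] at *; omega) hqp (Or.inl hpq.le)

theorem iff_of_forall_lt_mem {Q : ℤ → Prop} (hP : IsPathMatching S P)
    (hQ : IsPathMatching S Q) {x₀ : ℤ} (hS : ∀ x < x₀, x ∈ S) (x : ℤ) : P x ↔ Q x := by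
  have hmem : ∀ y ∈ S, P y ↔ Q y := fun y hy => by
    simp [(hP.not_of_mem hy).2, (hQ.not_of_mem hy).2]
  have hstep : ∀ y, (P (y - 1) ↔ Q (y - 1)) → (P y ↔ Q y) := fun y hy => by
    by_cases hyS : y ∈ S
    · exact hmem y hyS
    · rw [hP.iff_not_of_notMem hyS, hQ.iff_not_of_notMem hyS, hy]
  rcases lt_or_ge x x₀ with hx | hx
  · exact hmem x (hS x hx)
  induction x, hx using Int.leInduction with
  | base => exact hstep x₀ (hmem _ (hS _ (by omega)))
  | succ x _ ih => exact hstep (x + 1) (by rwa [add_sub_cancel_right])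

end IsPathMatching

theorem exists_isPathMatching_of_four {S : Set ℤ} {l p q r : ℤ} (hlp : l < p) (hpq : p < q)
    (hqr : q < r) (hpl : Odd (p - l)) (hqp : Odd (q - p)) (hrq : Odd (r - q))
    (hS : ∀ x, x ∈ S ↔ x ≤ l ∨ x = p ∨ x = q ∨ r ≤ x) : ∃ P, IsPathMatching S P := by
  -- `x` starts an edge iff it lies an odd distance after the last deleted point before it
  refine ⟨fun x => l < x ∧ x + 1 < r ∧ x ≠ p ∧ x ≠ q ∧ (Odd (x - l) ↔ (p < x ↔ q < x)),
    fun x => ?_⟩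
  simp only [hS, Int.odd_iff] at *
  omega

def vertEdge (x t : ℤ) : Sym2 (ℤ × ℤ) := s((x, t), (x, t + 1))

def horizEdge (x t : ℤ) : Sym2 (ℤ × ℤ) := s((x, t), (x + 1, t))

theorem mem_vertEdge {x t : ℤ} {v : ℤ × ℤ} :
    v ∈ vertEdge x t ↔ v.1 = x ∧ (v.2 = t ∨ v.2 = t + 1) := by
  obtain ⟨a, b⟩ := v
  simp only [vertEdge, Sym2.mem_iff, Prod.ext_iff]
  omega

theorem mem_horizEdge {x t : ℤ} {v : ℤ × ℤ} :
    v ∈ horizEdge x t ↔ v.2 = t ∧ (v.1 = x ∨ v.1 = x + 1) := by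
  obtain ⟨a, b⟩ := v
  simp only [horizEdge, Sym2.mem_iff, Prod.ext_iff]
  omega

theorem vertEdge_inj {x t x' t' : ℤ} : vertEdge x t = vertEdge x' t' ↔ x = x' ∧ t = t' := by
  simp only [vertEdge, Sym2.eq_iff, Prod.ext_iff]
  omega

theorem horizEdge_inj {x t x' t' : ℤ} : horizEdge x t = horizEdge x' t' ↔ x = x' ∧ t = t' := by
  simp only [horizEdge, Sym2.eq_iff, Prod.ext_iff]
  omega

theorem vertEdge_ne_horizEdge (x t x' t' : ℤ) : vertEdge x t ≠ horizEdge x' t' := by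
  simp only [vertEdge, horizEdge, ne_eq, Sym2.eq_iff, Prod.ext_iff]
  omega

theorem mem_hexVerts {v c : ℤ × ℤ} : v ∈ hexVerts c ↔
    (v.2 = c.2 ∨ v.2 = c.2 + 1) ∧ (v.1 = c.1 ∨ v.1 = c.1 + 1 ∨ v.1 = c.1 + 2) := by
  obtain ⟨a, b⟩ := v
  simp only [hexVerts, Set.mem_insert_iff, Set.mem_singleton_iff, Prod.ext_iff]
  omega

theorem brickAdj_comm {u v : ℤ × ℤ} : brickAdj u v ↔ brickAdj v u := by
  simp only [brickAdj, Int.even_iff]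
  omega

section HexGraph

variable {H : Set (ℤ × ℤ)}

theorem hexGraph_adj {u v : ℤ × ℤ} : (hexGraph H).Adj u v ↔
    u ≠ v ∧ brickAdj u v ∧ ∃ c ∈ H, u ∈ hexVerts c ∧ v ∈ hexVerts c := by
  simp only [hexGraph, fromRel_adj, brickAdj_comm (u := v)]
  grind

theorem mem_hexVertexSet_of_mem_edge {e : Sym2 (ℤ × ℤ)} (he : e ∈ (hexGraph H).edgeSet)
    {v : ℤ × ℤ} (hv : v ∈ e) : v ∈ hexVertexSet H := by
  induction e with
  | h a b =>
    obtain ⟨-, -, c, hc, ha, hb⟩ := hexGraph_adj.1 he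
    rcases Sym2.mem_iff.1 hv with rfl | rfl
    exacts [Set.mem_biUnion hc ha, Set.mem_biUnion hc hb]

theorem horizEdge_mem_edgeSet {x t : ℤ} : horizEdge x t ∈ (hexGraph H).edgeSet ↔
    ∃ c ∈ H, (x, t) ∈ hexVerts c ∧ (x + 1, t) ∈ hexVerts c := by
  rw [horizEdge, mem_edgeSet, hexGraph_adj]
  exact ⟨fun h => h.2.2, fun h => ⟨by simp, by simp [brickAdj], h⟩⟩

theorem vertEdge_mem_edgeSet {x t : ℤ} : vertEdge x t ∈ (hexGraph H).edgeSet ↔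
    Even (x + t) ∧ ∃ c ∈ H, (x, t) ∈ hexVerts c ∧ (x, t + 1) ∈ hexVerts c := by
  have hb : brickAdj (x, t) (x, t + 1) ↔ Even (x + t) := by
    simp only [brickAdj, true_and, Int.even_iff]
    omega
  rw [vertEdge, mem_edgeSet, hexGraph_adj]
  exact ⟨fun h => ⟨hb.1 h.2.1, h.2.2⟩, fun h => ⟨by simp, hb.2 h.1, h.2⟩⟩

theorem exists_eq_horizEdge_or_vertEdge {e : Sym2 (ℤ × ℤ)} (he : e ∈ (hexGraph H).edgeSet) :
    ∃ x t, e = horizEdge x t ∨ e = vertEdge x t := by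
  induction e with
  | h a b =>
    obtain ⟨-, hab, -⟩ := hexGraph_adj.1 he
    obtain ⟨a1, a2⟩ := a
    obtain ⟨b1, b2⟩ := b
    simp only [brickAdj] at hab
    rcases hab with ⟨rfl, rfl | rfl⟩ | ⟨rfl, ⟨rfl, -⟩ | ⟨rfl, -⟩⟩
    exacts [⟨b1, a2, Or.inl Sym2.eq_swap⟩, ⟨a1, a2, Or.inl rfl⟩,
      ⟨a1, b2, Or.inr Sym2.eq_swap⟩, ⟨a1, a2, Or.inr rfl⟩]

theorem eq_of_mem_edgeSet {e : Sym2 (ℤ × ℤ)} (he : e ∈ (hexGraph H).edgeSet) {x t : ℤ}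
    (hv : (x, t) ∈ e) : e = horizEdge (x - 1) t ∨ e = horizEdge x t ∨
      e = vertEdge x (t - 1) ∨ e = vertEdge x t := by
  obtain ⟨y, s, rfl | rfl⟩ := exists_eq_horizEdge_or_vertEdge he
  · obtain ⟨rfl, rfl | rfl⟩ := mem_horizEdge.1 hv
    · exact Or.inr (Or.inl rfl)
    · exact Or.inl (by rw [add_sub_cancel_right])
  · obtain ⟨rfl, rfl | rfl⟩ := mem_vertEdge.1 hv
    · exact Or.inr (Or.inr (Or.inr rfl))
    · exact Or.inr (Or.inr (Or.inl (by rw [add_sub_cancel_right])))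

end HexGraph

theorem IsPMOn.eq_of_mem {V : Type*} {G : SimpleGraph V} {A : Set V} {M : Set (Sym2 V)}
    (hM : IsPMOn G A M) {e f : Sym2 V} (he : e ∈ M) (hf : f ∈ M) {v : V} (hve : v ∈ e)
    (hvf : v ∈ f) : e = f := by
  by_contra hne
  exact hM.2.2.1 he hf hne v hve hvf

section HexMatching

variable {H : Set (ℤ × ℤ)} {M : Set (Sym2 (ℤ × ℤ))}

def levelBlocked (H : Set (ℤ × ℤ)) (M : Set (Sym2 (ℤ × ℤ))) (t : ℤ) : Set ℤ :=
  {x | (x, t) ∉ hexVertexSet H ∨ vertEdge x (t - 1) ∈ M ∨ vertEdge x t ∈ M}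

theorem hexPM.isPathMatching (hM : hexPM H M) (t : ℤ) :
    IsPathMatching (levelBlocked H M t) (fun x => horizEdge x t ∈ M) := by
  intro x
  have hl : (x, t) ∈ horizEdge (x - 1) t := mem_horizEdge.2 ⟨rfl, Or.inr (by ring)⟩
  have hr : (x, t) ∈ horizEdge x t := mem_horizEdge.2 ⟨rfl, Or.inl rfl⟩
  have hd : (x, t) ∈ vertEdge x (t - 1) := mem_vertEdge.2 ⟨rfl, Or.inr (by ring)⟩
  have hu : (x, t) ∈ vertEdge x t := mem_vertEdge.2 ⟨rfl, Or.inl rfl⟩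
  refine ⟨fun ⟨h1, h2⟩ => ?_, fun h => ?_, fun hx => ?_⟩
  · have := horizEdge_inj.1 (hM.eq_of_mem h1 h2 hl hr)
    omega
  · have hV : (x, t) ∈ hexVertexSet H := by
      rcases h with h | h
      exacts [hM.2.1 _ h _ hl, hM.2.1 _ h _ hr]
    have hnv : ∀ s, vertEdge x s ∈ M → (x, t) ∈ vertEdge x s → False := fun s hs hxs => by
      rcases h with h | h
      exacts [vertEdge_ne_horizEdge _ _ _ _ (hM.eq_of_mem hs h hxs hl),
        vertEdge_ne_horizEdge _ _ _ _ (hM.eq_of_mem hs h hxs hr)]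
    rintro (hx | hx | hx)
    exacts [hx hV, hnv _ hx hd, hnv _ hx hu]
  · simp only [levelBlocked, Set.mem_ofPred_eq, not_or, not_not] at hx
    obtain ⟨hV, hd', hu'⟩ := hx
    obtain ⟨e, he, hve⟩ := hM.2.2.2 _ hV
    rcases eq_of_mem_edgeSet (hM.1 he) hve with rfl | rfl | rfl | rfl
    exacts [Or.inl he, Or.inr he, (hd' he).elim, (hu' he).elim]

theorem hexPM_of_isPathMatching (hsub : M ⊆ (hexGraph H).edgeSet)
    (hvert : ∀ x t, vertEdge x t ∈ M → vertEdge x (t + 1) ∉ M)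
    (hlevel : ∀ t, IsPathMatching (levelBlocked H M t) (fun x => horizEdge x t ∈ M)) :
    hexPM H M := by
  refine ⟨hsub, fun e he v hv => mem_hexVertexSet_of_mem_edge (hsub he) hv, ?_, ?_⟩
  · rintro e he f hf hne ⟨x, t⟩ hve hvf
    have hHH := (hlevel t x).1
    have hHV := (hlevel t x).2.1
    have hVV : ¬(vertEdge x (t - 1) ∈ M ∧ vertEdge x t ∈ M) := fun h =>
      hvert x (t - 1) h.1 (by rw [sub_add_cancel]; exact h.2)
    simp only [levelBlocked, Set.mem_ofPred_eq] at hHV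
    rcases eq_of_mem_edgeSet (hsub he) hve with rfl | rfl | rfl | rfl <;>
      rcases eq_of_mem_edgeSet (hsub hf) hvf with rfl | rfl | rfl | rfl <;>
      first | exact hne rfl | tauto
  · rintro ⟨x, t⟩ hV
    by_cases hx : x ∈ levelBlocked H M t
    · simp only [levelBlocked, Set.mem_ofPred_eq] at hx
      rcases hx with hx | hx | hx
      exacts [(hx hV).elim, ⟨_, hx, mem_vertEdge.2 ⟨rfl, Or.inr (by ring)⟩⟩,
        ⟨_, hx, mem_vertEdge.2 ⟨rfl, Or.inl rfl⟩⟩]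
    · rcases (hlevel t x).2.2 hx with h | h
      exacts [⟨_, h, mem_horizEdge.2 ⟨rfl, Or.inr (by ring)⟩⟩,
        ⟨_, h, mem_horizEdge.2 ⟨rfl, Or.inl rfl⟩⟩]

theorem hexPM.eq_of_vertEdge_mem_iff {M' : Set (Sym2 (ℤ × ℤ))} {x₀ : ℤ}
    (hH : ∀ c ∈ H, x₀ ≤ c.1) (hM : hexPM H M) (hM' : hexPM H M')
    (hvert : ∀ x t, vertEdge x t ∈ M ↔ vertEdge x t ∈ M') : M = M' := by
  have hblocked : ∀ t, levelBlocked H M t = levelBlocked H M' t := fun t => by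
    ext x
    simp only [levelBlocked, Set.mem_ofPred_eq, hvert]
  have hleft : ∀ t, ∀ x < x₀, x ∈ levelBlocked H M t := fun t x hx => Or.inl fun hV => by
    simp only [hexVertexSet, Set.mem_iUnion] at hV
    obtain ⟨c, hc, hxc⟩ := hV
    have := hH c hc
    rw [mem_hexVerts] at hxc
    omega
  have hhoriz : ∀ x t, horizEdge x t ∈ M ↔ horizEdge x t ∈ M' := fun x t =>
    (hM.isPathMatching t).iff_of_forall_lt_mem (hblocked t ▸ hM'.isPathMatching t) (hleft t) x
  ext e
  constructor <;> intro he
  · obtain ⟨x, t, rfl | rfl⟩ := exists_eq_horizEdge_or_vertEdge (hM.1 he)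
    exacts [(hhoriz x t).1 he, (hvert x t).1 he]
  · obtain ⟨x, t, rfl | rfl⟩ := exists_eq_horizEdge_or_vertEdge (hM'.1 he)
    exacts [(hhoriz x t).2 he, (hvert x t).2 he]

end HexMatching

/-- `f` as a function on `ℤ`, with junk value `0` outside `[0, m)`. -/
def extendFin {m : ℕ} (f : Fin m → ℕ) (i : ℤ) : ℤ :=
  if h : 0 ≤ i ∧ i < m then f ⟨i.toNat, by omega⟩ else 0

section ExtendFin

variable {m : ℕ}

theorem extendFin_coe (f : Fin m → ℕ) (i : Fin m) : extendFin f i = f i := by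
  simp [extendFin]

theorem Fin.exists_coe_eq {i : ℤ} (h0 : 0 ≤ i) (hi : i < m) : ∃ i' : Fin m, (i' : ℤ) = i :=
  ⟨⟨i.toNat, by omega⟩, Int.toNat_of_nonneg h0⟩

theorem extendFin_mono {f : Fin m → ℕ} (hf : Monotone f) {i j : ℤ} (h0 : 0 ≤ i) (hij : i ≤ j)
    (hj : j < m) : extendFin f i ≤ extendFin f j := by
  obtain ⟨i, rfl⟩ := Fin.exists_coe_eq (m := m) h0 (by omega)
  obtain ⟨j, rfl⟩ := Fin.exists_coe_eq (by omega) hj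
  rw [extendFin_coe, extendFin_coe]
  exact_mod_cast hf (Fin.le_def.2 (by omega))

theorem one_le_extendFin {f : Fin m → ℕ} (hf : ∀ i, 1 ≤ f i) {i : ℤ} (h0 : 0 ≤ i) (hi : i < m) :
    1 ≤ extendFin f i := by
  obtain ⟨i, rfl⟩ := Fin.exists_coe_eq h0 hi
  rw [extendFin_coe]
  exact_mod_cast hf i

theorem extendFin_le_extendFin {f g : Fin m → ℕ} (h : ∀ i, f i ≤ g i) (i : ℤ) :
    extendFin f i ≤ extendFin g i := by
  unfold extendFin
  split_ifs
  · exact_mod_cast h _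
  · rfl

theorem extendFin_nonneg (f : Fin m → ℕ) (i : ℤ) : 0 ≤ extendFin f i := by
  unfold extendFin
  split_ifs <;> omega

end ExtendFin

section TruncPar

variable {m : ℕ} {k : Fin m → ℕ}

theorem mem_truncPar {c : ℤ × ℤ} : c ∈ truncPar m k ↔
    ∃ i j : ℤ, 0 ≤ i ∧ i < m ∧ 1 ≤ j ∧ j ≤ extendFin k i ∧ c = (2 * (j - 1) + i, -i) := by
  constructor
  · rintro ⟨i, j, hj1, hjk, rfl⟩
    exact ⟨i, j, by omega, by omega, by exact_mod_cast hj1,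
      by rw [extendFin_coe]; exact_mod_cast hjk, rfl⟩
  · rintro ⟨i, j, h0, hi, hj1, hjk, rfl⟩
    obtain ⟨i, rfl⟩ := Fin.exists_coe_eq h0 hi
    rw [extendFin_coe] at hjk
    exact ⟨i, j.toNat, by omega, by omega, by rw [Int.toNat_of_nonneg (by omega)]⟩

theorem hexagon_mem_truncPar {i j : ℤ} (h0 : 0 ≤ i) (hi : i < m) (hj1 : 1 ≤ j)
    (hjk : j ≤ extendFin k i) : (2 * (j - 1) + i, -i) ∈ truncPar m k :=
  mem_truncPar.2 ⟨i, j, h0, hi, hj1, hjk, rfl⟩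

theorem mem_hexVertexSet_truncPar (hk1 : ∀ i, 1 ≤ k i) {x t : ℤ} :
    (x, t) ∈ hexVertexSet (truncPar m k) ↔ ∃ i : ℤ, (t = -i ∨ t = 1 - i) ∧ 0 ≤ i ∧ i < m ∧
      i ≤ x ∧ x ≤ i + 2 * extendFin k i := by
  simp only [hexVertexSet, Set.mem_iUnion, exists_prop]
  constructor
  · rintro ⟨c, hc, hxc⟩
    obtain ⟨i, j, h0, hi, hj1, hjk, rfl⟩ := mem_truncPar.1 hc
    rw [mem_hexVerts] at hxc
    exact ⟨i, by omega, h0, hi, by omega, by omega⟩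
  · rintro ⟨i, ht, h0, hi, hix, hxi⟩
    have := one_le_extendFin hk1 h0 hi
    exact ⟨_, hexagon_mem_truncPar (j := max 1 ((x - i + 1) / 2)) h0 hi (by omega) (by omega),
      by rw [mem_hexVerts]; omega⟩

theorem vertEdge_mem_edgeSet_truncPar (hk1 : ∀ i, 1 ≤ k i) {x t : ℤ} :
    vertEdge x t ∈ (hexGraph (truncPar m k)).edgeSet ↔ ∃ i : ℤ, t = -i ∧ 0 ≤ i ∧ i < m ∧
      Even (x - i) ∧ i ≤ x ∧ x ≤ i + 2 * extendFin k i := by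
  rw [vertEdge_mem_edgeSet, Int.even_iff]
  constructor
  · rintro ⟨hxt, c, hc, hxc, hxc'⟩
    obtain ⟨i, j, h0, hi, hj1, hjk, rfl⟩ := mem_truncPar.1 hc
    rw [mem_hexVerts] at hxc hxc'
    exact ⟨i, by omega, h0, hi, by rw [Int.even_iff]; omega, by omega, by omega⟩
  · rintro ⟨i, rfl, h0, hi, hxi, hix, hxk⟩
    rw [Int.even_iff] at hxi
    have := one_le_extendFin hk1 h0 hi
    exact ⟨by omega, _, hexagon_mem_truncPar (j := max 1 ((x - i) / 2)) h0 hi (by omega) (by omega),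
      by rw [mem_hexVerts]; omega, by rw [mem_hexVerts]; omega⟩

theorem horizEdge_mem_edgeSet_truncPar (hk1 : ∀ i, 1 ≤ k i) {x t : ℤ}
    (hx : (x, t) ∈ hexVertexSet (truncPar m k)) (hx' : (x + 1, t) ∈ hexVertexSet (truncPar m k)) :
    horizEdge x t ∈ (hexGraph (truncPar m k)).edgeSet := by
  rw [mem_hexVertexSet_truncPar hk1] at hx hx'
  obtain ⟨i, ht, h0, hi, hix, hxi⟩ := hx
  obtain ⟨i', ht', h0', hi', hix', hxi'⟩ := hx'
  have := one_le_extendFin hk1 h0 hi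
  have hrow : ∀ r, (t = -r ∨ t = 1 - r) → 0 ≤ r → r < m → r ≤ x →
      x + 1 ≤ r + 2 * extendFin k r → horizEdge x t ∈ (hexGraph (truncPar m k)).edgeSet :=
    fun r ht h0 hr hrx hxr => horizEdge_mem_edgeSet.2
      ⟨_, hexagon_mem_truncPar (j := (x - r) / 2 + 1) h0 hr (by omega) (by omega),
        by rw [mem_hexVerts]; omega, by rw [mem_hexVerts]; omega⟩
  by_cases hxi1 : x + 1 ≤ i + 2 * extendFin k i
  · exact hrow i ht h0 hi hix hxi1
  · exact hrow i' ht' h0' hi' (by omega) hxi'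

theorem fst_nonneg_of_mem_truncPar {c : ℤ × ℤ} (hc : c ∈ truncPar m k) : 0 ≤ c.1 := by
  obtain ⟨i, j, h0, -, hj1, -, rfl⟩ := mem_truncPar.1 hc
  dsimp only
  omega

end TruncPar

def IsRowVertical (M : Set (Sym2 (ℤ × ℤ))) (j s : ℤ) : Prop :=
  ∀ x, vertEdge x (-j) ∈ M ↔ x = j + 2 * s

theorem IsRowVertical.unique {M : Set (Sym2 (ℤ × ℤ))} {j s s' : ℤ} (h : IsRowVertical M j s)
    (h' : IsRowVertical M j s') : s = s' := by
  have := (h' _).1 ((h _).2 rfl)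
  omega

section Decomposition

variable {m : ℕ} {k : Fin m → ℕ} {M : Set (Sym2 (ℤ × ℤ))}

/-- Level `1 - j` is the top of row `j`; `p` is the abscissa of the vertical edge of row `j - 1`,
or `-1` when `j = 0`. -/
theorem exists_isRowVertical_of_level (hk1 : ∀ i, 1 ≤ k i) (hmono : Monotone k)
    (hM : hexPM (truncPar m k) M) {j p : ℤ} (hjm : j < m) (hpj : Odd (p - j))
    (hjp : j - 1 ≤ p) (hpk : p ≤ j - 1 + 2 * extendFin k j)
    (hB : ∀ u, j - 1 ≤ u → u ≤ j + 2 * extendFin k j →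
      (u ∈ levelBlocked (truncPar m k) M (1 - j) ↔ u = p ∨ vertEdge u (-j) ∈ M)) :
    ∃ s, p < j + 2 * s ∧ s ≤ extendFin k j ∧ IsRowVertical M j s := by
  have hvert : ∀ x, vertEdge x (-j) ∈ M → Even (x - j) ∧ j ≤ x ∧ x ≤ j + 2 * extendFin k j := by
    intro x hx
    obtain ⟨i, hi, -, -, h⟩ := (vertEdge_mem_edgeSet_truncPar hk1).1 (hM.1 hx)
    obtain rfl : i = j := by omega
    exact h
  have hl : j - 2 ∈ levelBlocked (truncPar m k) M (1 - j) := Or.inl fun hV => by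
    obtain ⟨i, hi, -, -, hix, -⟩ := (mem_hexVertexSet_truncPar hk1).1 hV
    omega
  have hr : j + 2 * extendFin k j + 1 ∈ levelBlocked (truncPar m k) M (1 - j) :=
    Or.inl fun hV => by
      obtain ⟨i, hi, hi0, -, -, hxi⟩ := (mem_hexVertexSet_truncPar hk1).1 hV
      obtain rfl | rfl : i = j - 1 ∨ i = j := by omega
      · have := extendFin_mono hmono hi0 (by omega : j - 1 ≤ j) hjm
        omega
      · omega
  have hwin : ∀ u ∈ levelBlocked (truncPar m k) M (1 - j), j - 2 < u →
      u < j + 2 * extendFin k j + 1 → u ≠ p → Odd (u - p) := by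
    intro u hu hlu hur hup
    have hu' := ((hB u (by omega) (by omega)).1 hu).resolve_left hup
    have := (hvert u hu').1
    rw [Int.even_iff] at this
    rw [Int.odd_iff] at hpj ⊢
    omega
  obtain ⟨q, hq, hpq, hqr, huniq⟩ := (hM.isPathMatching (1 - j)).exists_partner_of_window hl
    ((hB p hjp (by omega)).2 (Or.inl rfl)) hr (by omega) (by omega)
    (by rw [Int.odd_iff] at hpj ⊢; omega) (by rw [Int.odd_iff] at hpj; rw [Int.even_iff]; omega)
    hwin
  have hqv := ((hB q (by omega) (by omega)).1 hq).resolve_left (by omega)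
  obtain ⟨hqj, hjq, hqk⟩ := hvert q hqv
  rw [Int.even_iff] at hqj
  refine ⟨(q - j) / 2, by omega, by omega, fun x => ⟨fun hx => ?_, fun hx => ?_⟩⟩
  · obtain ⟨hxj, hjx, hxk⟩ := hvert x hx
    rcases huniq x ((hB x (by omega) hxk).2 (Or.inr hx)) (by omega) (by omega) with rfl | rfl
    · rw [Int.even_iff] at hxj
      rw [Int.odd_iff] at hpj
      omega
    · omega
  · rwa [show x = q by omega]

theorem exists_isRowVertical_zero (hk1 : ∀ i, 1 ≤ k i) (hmono : Monotone k)
    (hM : hexPM (truncPar m k) M) (hm : 0 < m) :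
    ∃ s, 0 ≤ s ∧ s ≤ extendFin k 0 ∧ IsRowVertical M 0 s := by
  have hK := extendFin_nonneg k 0
  obtain ⟨s, hs, hsk, hcol⟩ := exists_isRowVertical_of_level hk1 hmono hM (j := 0) (by omega)
    (p := -1) (by decide) (by omega) (by omega) fun u hu hu' => by
      -- `(-1, 1)` is not a vertex: it blocks level `1` like a vertical edge above row `0`
      have hV : (u, 1 - 0) ∈ hexVertexSet (truncPar m k) ↔ 0 ≤ u := by
        rw [mem_hexVertexSet_truncPar hk1]
        constructor
        · rintro ⟨i, -, hi0, -, hiu, -⟩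
          omega
        · exact fun h => ⟨0, by omega, le_rfl, by exact_mod_cast hm, h, hu'⟩
      have hup : vertEdge u (1 - 0) ∉ M := fun h => by
        obtain ⟨i, hi, hi0, -⟩ := (vertEdge_mem_edgeSet_truncPar hk1).1 (hM.1 h)
        omega
      simp only [levelBlocked, Set.mem_ofPred_eq, hV, show (1 : ℤ) - 0 - 1 = -0 by rfl,
        show u = -1 ↔ ¬0 ≤ u by omega]
      tauto
  exact ⟨s, by omega, hsk, hcol⟩

theorem exists_isRowVertical_succ (hk1 : ∀ i, 1 ≤ k i) (hmono : Monotone k)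
    (hM : hexPM (truncPar m k) M) {j s : ℤ} (hj0 : 0 ≤ j) (hjm : j + 1 < m) (hs0 : 0 ≤ s)
    (hsk : s ≤ extendFin k j) (hcol : IsRowVertical M j s) :
    ∃ s', s ≤ s' ∧ s' ≤ extendFin k (j + 1) ∧ IsRowVertical M (j + 1) s' := by
  have hKj := one_le_extendFin hk1 hj0 (by omega)
  have hKmono := extendFin_mono hmono hj0 (by omega : j ≤ j + 1) hjm
  obtain ⟨s', hss', hsk', hcol'⟩ := exists_isRowVertical_of_level hk1 hmono hM hjm
    (p := j + 2 * s) (by rw [Int.odd_iff]; omega) (by omega) (by omega) fun u hu hu' => by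
      have hV : (u, 1 - (j + 1)) ∈ hexVertexSet (truncPar m k) := by
        rw [mem_hexVertexSet_truncPar hk1]
        by_cases hur : u ≤ j + 2 * extendFin k j
        · exact ⟨j, Or.inl (by ring), hj0, by omega, by omega, hur⟩
        · exact ⟨j + 1, Or.inr (by ring), by omega, hjm, by omega, hu'⟩
      rw [show 1 - (j + 1) = -j by ring] at hV ⊢
      simp only [levelBlocked, Set.mem_ofPred_eq, show -j - 1 = -(j + 1) by ring, hcol u]
      tauto
  exact ⟨s', by omega, hsk', hcol'⟩

theorem exists_isRowVertical (hk1 : ∀ i, 1 ≤ k i) (hmono : Monotone k)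
    (hM : hexPM (truncPar m k) M) {j : ℤ} (hj0 : 0 ≤ j) (hjm : j < m) :
    ∃ s, 0 ≤ s ∧ s ≤ extendFin k j ∧ IsRowVertical M j s := by
  induction j, hj0 using Int.leInduction with
  | base => exact exists_isRowVertical_zero hk1 hmono hM (by omega)
  | succ j hj ih =>
    obtain ⟨s, hs0, hsk, hcol⟩ := ih (by omega)
    obtain ⟨s', hss', hsk', hcol'⟩ := exists_isRowVertical_succ hk1 hmono hM hj hjm hs0 hsk hcol
    exact ⟨s', by omega, hsk', hcol'⟩

end Decomposition

def HasColumns {m : ℕ} (M : Set (Sym2 (ℤ × ℤ))) (a : Fin m → ℕ) : Prop :=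
  ∀ x t, vertEdge x t ∈ M ↔ ∃ i : Fin m, t = -i ∧ x = i + 2 * a i

section Columns

variable {m : ℕ} {k : Fin m → ℕ} {M : Set (Sym2 (ℤ × ℤ))}

theorem HasColumns.unique {a b : Fin m → ℕ} (ha : HasColumns M a) (hb : HasColumns M b) :
    a = b := by
  funext i
  obtain ⟨i', hi, hx⟩ := (hb _ _).1 ((ha _ _).2 ⟨i, rfl, rfl⟩)
  obtain rfl : i' = i := Fin.ext (by omega)
  omega

theorem HasColumns.vertEdge_mem_iff {a : Fin m → ℕ} (ha : HasColumns M a) {x t : ℤ} :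
    vertEdge x t ∈ M ↔ ∃ i : ℤ, t = -i ∧ 0 ≤ i ∧ i < m ∧ x = i + 2 * extendFin a i := by
  rw [ha]
  constructor
  · rintro ⟨i, rfl, rfl⟩
    exact ⟨i, rfl, by omega, by omega, by rw [extendFin_coe]⟩
  · rintro ⟨i, rfl, h0, hi, rfl⟩
    obtain ⟨i, rfl⟩ := Fin.exists_coe_eq h0 hi
    exact ⟨i, rfl, by rw [extendFin_coe]⟩

theorem exists_hasColumns (hk1 : ∀ i, 1 ≤ k i) (hmono : Monotone k)
    (hM : hexPM (truncPar m k) M) :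
    ∃ a : Fin m → ℕ, Monotone a ∧ (∀ i, a i ≤ k i) ∧ HasColumns M a := by
  choose! A hA using fun (j : ℤ) (hj0 : 0 ≤ j) (hjm : j < m) =>
    exists_isRowVertical hk1 hmono hM hj0 hjm
  have hAmono : ∀ i j : ℤ, 0 ≤ i → i ≤ j → j < m → A i ≤ A j := by
    intro i j hi hij
    induction j, hij using Int.leInduction with
    | base => exact fun _ => le_rfl
    | succ j hij ih =>
      intro hjm
      obtain ⟨hs0, hsk, hcol⟩ := hA j (by omega) (by omega)
      obtain ⟨s', hss', -, hcol'⟩ :=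
        exists_isRowVertical_succ hk1 hmono hM (by omega) hjm hs0 hsk hcol
      have := (hA (j + 1) (by omega) hjm).2.2.unique hcol'
      have := ih (by omega)
      omega
  refine ⟨fun i => (A i).toNat, fun i j hij => ?_, fun i => ?_, fun x t => ⟨fun hx => ?_, ?_⟩⟩
  · have := hAmono i j (by omega) (by exact_mod_cast hij) (by omega)
    dsimp only
    omega
  · have := (hA i (by omega) (by omega)).2.1
    rw [extendFin_coe] at this
    dsimp only
    omega
  · obtain ⟨i, rfl, h0, hi, -⟩ := (vertEdge_mem_edgeSet_truncPar hk1).1 (hM.1 hx)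
    obtain ⟨i, rfl⟩ := Fin.exists_coe_eq h0 hi
    obtain ⟨hs0, -, hcol⟩ := hA i h0 hi
    exact ⟨i, rfl, by dsimp only; rw [(hcol x).1 hx]; omega⟩
  · rintro ⟨i, rfl, rfl⟩
    obtain ⟨hs0, -, hcol⟩ := hA i (by omega) (by omega)
    dsimp only
    exact (hcol _).2 (by omega)

theorem exists_isPathMatching_levelBlocked (hk1 : ∀ i, 1 ≤ k i) (hmono : Monotone k)
    {a : Fin m → ℕ} (ha : Monotone a) (hak : ∀ i, a i ≤ k i) (hM : HasColumns M a) (t : ℤ) :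
    ∃ P, IsPathMatching (levelBlocked (truncPar m k) M t) P := by
  have hV : ∀ x, (x, t) ∈ hexVertexSet (truncPar m k) ↔
      (0 ≤ -t ∧ -t < m ∧ -t ≤ x ∧ x ≤ -t + 2 * extendFin k (-t)) ∨
        (0 ≤ 1 - t ∧ 1 - t < m ∧ 1 - t ≤ x ∧ x ≤ 1 - t + 2 * extendFin k (1 - t)) := by
    intro x
    rw [mem_hexVertexSet_truncPar hk1]
    constructor
    · rintro ⟨i, ht, h⟩
      obtain rfl | rfl : i = -t ∨ i = 1 - t := by omega
      exacts [Or.inl h, Or.inr h]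
    · rintro (h | h)
      exacts [⟨-t, Or.inl (neg_neg t).symm, h⟩, ⟨1 - t, Or.inr (sub_sub_cancel 1 t).symm, h⟩]
  have hvert : ∀ x s, vertEdge x s ∈ M ↔ 0 ≤ -s ∧ -s < m ∧ x = -s + 2 * extendFin a (-s) := by
    intro x s
    rw [hM.vertEdge_mem_iff]
    constructor
    · rintro ⟨i, rfl, h⟩
      rwa [neg_neg]
    · exact fun h => ⟨-s, (neg_neg s).symm, h⟩
  have hS : ∀ x, x ∈ levelBlocked (truncPar m k) M t ↔
      ¬((0 ≤ -t ∧ -t < m ∧ -t ≤ x ∧ x ≤ -t + 2 * extendFin k (-t)) ∨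
        (0 ≤ 1 - t ∧ 1 - t < m ∧ 1 - t ≤ x ∧ x ≤ 1 - t + 2 * extendFin k (1 - t))) ∨
      (0 ≤ 1 - t ∧ 1 - t < m ∧ x = 1 - t + 2 * extendFin a (1 - t)) ∨
      (0 ≤ -t ∧ -t < m ∧ x = -t + 2 * extendFin a (-t)) := by
    intro x
    simp only [levelBlocked, Set.mem_ofPred_eq, hV, hvert, neg_sub]
  have hA0 := extendFin_nonneg a (-t)
  have hA1 := extendFin_nonneg a (1 - t)
  have hAK0 := extendFin_le_extendFin (f := a) (g := k) hak (-t)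
  have hAK1 := extendFin_le_extendFin (f := a) (g := k) hak (1 - t)
  -- row `-t` lies above level `t` and row `1 - t` below it
  by_cases hup : 0 ≤ -t ∧ -t < m <;> by_cases hlow : 0 ≤ 1 - t ∧ 1 - t < m
  · have := one_le_extendFin hk1 hup.1 hup.2
    have := extendFin_mono hmono hup.1 (by omega : -t ≤ 1 - t) hlow.2
    have := extendFin_mono ha hup.1 (by omega : -t ≤ 1 - t) hlow.2
    exact exists_isPathMatching_of_four (l := -t - 1) (p := -t + 2 * extendFin a (-t))
      (q := 1 - t + 2 * extendFin a (1 - t)) (r := 2 - t + 2 * extendFin k (1 - t))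
      (by omega) (by omega) (by omega) (by rw [Int.odd_iff]; omega) (by rw [Int.odd_iff]; omega)
      (by rw [Int.odd_iff]; omega) fun x => by rw [hS]; omega
  · have := one_le_extendFin hk1 hup.1 hup.2
    exact exists_isPathMatching_of_four (l := -t - 1) (p := -t + 2 * extendFin a (-t))
      (q := 1 - t + 2 * extendFin k (-t)) (r := 2 - t + 2 * extendFin k (-t))
      (by omega) (by omega) (by omega) (by rw [Int.odd_iff]; omega) (by rw [Int.odd_iff]; omega)
      (by rw [Int.odd_iff]; omega) fun x => by rw [hS]; omega
  · have := one_le_extendFin hk1 hlow.1 hlow.2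
    exact exists_isPathMatching_of_four (l := -t - 1) (p := -t)
      (q := 1 - t + 2 * extendFin a (1 - t)) (r := 2 - t + 2 * extendFin k (1 - t))
      (by omega) (by omega) (by omega) (by rw [Int.odd_iff]; omega) (by rw [Int.odd_iff]; omega)
      (by rw [Int.odd_iff]; omega) fun x => by rw [hS]; omega
  · refine ⟨fun _ => False, fun x => ⟨fun h => h.1, ?_⟩⟩
    rw [or_self, false_iff, not_not, hS]
    omega

theorem exists_hexPM_hasColumns (hk1 : ∀ i, 1 ≤ k i) (hmono : Monotone k) {a : Fin m → ℕ}
    (ha : Monotone a) (hak : ∀ i, a i ≤ k i) :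
    ∃ M, hexPM (truncPar m k) M ∧ HasColumns M a := by
  set W : Set (Sym2 (ℤ × ℤ)) := {e | ∃ i : Fin m, e = vertEdge (i + 2 * a i) (-i)}
  have hW : HasColumns W a := fun x t => by
    simp only [W, Set.mem_ofPred_eq, vertEdge_inj]
    exact exists_congr fun i => And.comm
  choose P hP using exists_isPathMatching_levelBlocked hk1 hmono ha hak hW
  set M : Set (Sym2 (ℤ × ℤ)) := W ∪ {e | ∃ x t, P t x ∧ e = horizEdge x t}
  have hMv : ∀ x t, vertEdge x t ∈ M ↔ vertEdge x t ∈ W := fun x t => by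
    simp [M, vertEdge_ne_horizEdge]
  have hMh : ∀ x t, horizEdge x t ∈ M ↔ P t x := fun x t => by
    simp [M, W, horizEdge_inj, (vertEdge_ne_horizEdge _ _ _ _).symm]
  have hB : ∀ t, levelBlocked (truncPar m k) M t = levelBlocked (truncPar m k) W t := fun t => by
    ext x
    simp only [levelBlocked, Set.mem_ofPred_eq, hMv]
  have hMW : HasColumns M a := fun x t => (hMv x t).trans (hW x t)
  refine ⟨M, hexPM_of_isPathMatching ?_ ?_ fun t => ?_, hMW⟩
  · rintro e (⟨i, rfl⟩ | ⟨x, t, hx, rfl⟩)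
    · refine (vertEdge_mem_edgeSet_truncPar hk1).2 ⟨i, rfl, by omega, by omega, ⟨a i, by ring⟩,
        by omega, ?_⟩
      have := hak i
      rw [extendFin_coe]
      omega
    · have hx₀ := (hP t x).2.1 (Or.inr hx)
      have hx₁ := (hP t (x + 1)).2.1 (Or.inl (by rwa [add_sub_cancel_right]))
      simp only [levelBlocked, Set.mem_ofPred_eq, not_or, not_not] at hx₀ hx₁
      exact horizEdge_mem_edgeSet_truncPar hk1 hx₀.1 hx₁.1
  · intro x t hx hx'
    obtain ⟨i, rfl, rfl⟩ := (hMW _ _).1 hx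
    obtain ⟨i', hi', hx'⟩ := (hMW _ _).1 hx'
    omega
  · rw [hB]
    convert hP t using 2 with x
    exact hMh x t

end Columns

/-- The number of perfect matchings of the truncated parallelogram equals the
number of non-decreasing sequences `(a_1,…,a_m)` with `0 ≤ a_i ≤ k_i`. -/
theorem truncPar_pm_count (m : ℕ) (k : Fin m → ℕ)
    (hk1 : ∀ i, 1 ≤ k i) (hmono : Monotone k) :
    {M : Set (Sym2 (ℤ × ℤ)) | hexPM (truncPar m k) M}.ncard =
      {a : Fin m → ℕ | Monotone a ∧ ∀ i, a i ≤ k i}.ncard := by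
  choose! cols hcols using fun M (hM : hexPM (truncPar m k) M) => exists_hasColumns hk1 hmono hM
  refine Set.ncard_congr (fun M _ => cols M) (fun M hM => ⟨(hcols M hM).1, (hcols M hM).2.1⟩)
    (fun M M' hM hM' h => ?_) fun a ⟨ha, hak⟩ => ?_
  · refine hexPM.eq_of_vertEdge_mem_iff (fun c => fst_nonneg_of_mem_truncPar) hM hM' fun x t => ?_
    rw [(hcols M hM).2.2, (hcols M' hM').2.2, h]
  · obtain ⟨M, hM, hMa⟩ := exists_hexPM_hasColumns hk1 hmono ha hak
    exact ⟨M, hM, (hcols M hM).2.2.unique hMa⟩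
end
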